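/- arXiv:math/0411052 — 12 statements merged into one kernel-verified Lean document; each statement's English description precedes it below -/
import Mathlib

section
/- In the linear coin-removal game with gaps, if an arrangement has an even and positive number of heads-up coins, then for every choice of heads-up coin to remove, the resulting arrangement still has at least one part that is not removable; hence the original arrangement is not removable. -/
/-!
The parity of (number of heads) + (number of maximal blocks of coins) is invariant under moves.
Removing a heads coin drops one head; each occupied neighbour is flipped, changing the head count
by one, while the block count changes by one less than the number of occupied neighbours
(a lone coin's block disappears, an end coin shortens its block, an inner coin splits it).
The empty arrangement has parity `0`, while a nonempty row of coins with an even number of heads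
has parity `1`.
-/

/-- Flip the coin at position `j` if a coin is present there. -/
def gFlip (l : List (Option Bool)) (j : ℕ) : List (Option Bool) :=
  l.set j ((l.getD j none).map (!·))

/-- One move in the linear coin-removal game with gaps. -/
def gStep (A B : List (Option Bool)) : Prop :=
  ∃ i, A.getD i none = some true ∧
    B = gFlip (gFlip (A.set i none) (i + 1)) (i - 1)

/-- An arrangement is removable if a sequence of moves empties all positions. -/
def gRemovable (A : List (Option Bool)) : Prop :=
  Relation.ReflTransGen gStep A (List.replicate A.length none)

def gMove (l : List (Option Bool)) (i : ℕ) : List (Option Bool) :=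
  gFlip (gFlip (l.set i none) (i + 1)) (i - 1)

/-- Heads plus blocks, mod 2, where `occ` says whether the position just before the list is
occupied; each block is counted where it ends. -/
def coinParity : Bool → List (Option Bool) → ZMod 2
  | occ, [] => if occ then 1 else 0
  | occ, none :: t => (if occ then 1 else 0) + coinParity false t
  | _, some b :: t => (if b then 1 else 0) + coinParity true t

lemma gFlip_cons_succ (x : Option Bool) (t : List (Option Bool)) (j : ℕ) :
    gFlip (x :: t) (j + 1) = x :: gFlip t j := by
  simp [gFlip]

lemma gMove_cons_add_two (x : Option Bool) (t : List (Option Bool)) (i : ℕ) :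
    gMove (x :: t) (i + 2) = x :: gMove t (i + 1) := by
  simp only [gMove, List.set_cons_succ, gFlip_cons_succ]
  rfl

lemma coinParity_false_gFlip_zero (u : List (Option Bool)) :
    coinParity false (gFlip u 0) = 1 + coinParity true u := by
  match u with
  | [] => simp [gFlip, coinParity]; decide
  | none :: v => simp [gFlip, coinParity, ← add_assoc, CharTwo.add_self_eq_zero]
  | some b :: v => cases b <;> simp [gFlip, coinParity, ← add_assoc, CharTwo.add_self_eq_zero]

lemma coinParity_gMove (l : List (Option Bool)) (i : ℕ) (occ : Bool)
    (hi : l.getD i none = some true) (hocc : i = 0 → occ = false) :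
    coinParity occ (gMove l i) = coinParity occ l := by
  induction l generalizing i occ with
  | nil => simp at hi
  | cons x t ih =>
    rcases i with _ | _ | n
    · obtain rfl : x = some true := by simpa using hi
      obtain rfl := hocc rfl
      have hmove : gMove (some true :: t) 0 = none :: gFlip t 0 := by simp [gMove, gFlip]
      simp [hmove, coinParity, coinParity_false_gFlip_zero]
    · obtain ⟨u, rfl⟩ : ∃ u, t = some true :: u := by
        rcases t with _ | ⟨y, u⟩
        · simp at hi
        · exact ⟨u, by simpa using hi⟩
      have hmove : gMove (x :: some true :: u) 1 = x.map (!·) :: none :: gFlip u 0 := by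
        cases x <;> simp [gMove, gFlip]
      rcases x with _ | _ | _ <;>
        simp [hmove, coinParity, coinParity_false_gFlip_zero, ← add_assoc,
          CharTwo.add_self_eq_zero]
    · have ht : ∀ occ', coinParity occ' (gMove t (n + 1)) = coinParity occ' t :=
        fun occ' => ih (n + 1) occ' (by simpa using hi) (by omega)
      rw [gMove_cons_add_two]
      cases x <;> simp only [coinParity, ht]

lemma coinParity_eq_of_gStep {A B : List (Option Bool)} (h : gStep A B) :
    coinParity false B = coinParity false A := by
  obtain ⟨i, hi, rfl⟩ := h
  exact coinParity_gMove A i false hi fun _ => rfl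

lemma coinParity_replicate_none (n : ℕ) : coinParity false (List.replicate n none) = 0 := by
  induction n with
  | zero => rfl
  | succ m ih => simp [List.replicate_succ, coinParity, ih]

lemma coinParity_eq_of_reflTransGen {A C : List (Option Bool)}
    (h : Relation.ReflTransGen gStep A C) : coinParity false C = coinParity false A := by
  induction h with
  | refl => rfl
  | tail _ hstep ih => exact (coinParity_eq_of_gStep hstep).trans ih

lemma coinParity_eq_zero_of_gRemovable {A : List (Option Bool)} (h : gRemovable A) :
    coinParity false A = 0 :=
  (coinParity_eq_of_reflTransGen h).symm.trans (coinParity_replicate_none _)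

lemma not_gRemovable_of_coinParity_eq_one {A : List (Option Bool)}
    (h : coinParity false A = 1) : ¬ gRemovable A := fun hA => by
  simp [coinParity_eq_zero_of_gRemovable hA] at h

lemma coinParity_true_map_some (A : List Bool) :
    coinParity true (A.map some) = A.count true + 1 := by
  induction A with
  | nil => simp [coinParity]
  | cons b t ih => cases b <;> simp [coinParity, ih]; ring

lemma coinParity_map_some {A : List Bool} (hA : A ≠ []) (occ : Bool) :
    coinParity occ (A.map some) = A.count true + 1 := by
  obtain ⟨b, t, rfl⟩ := List.exists_cons_of_ne_nil hA
  rw [← coinParity_true_map_some]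
  rfl

/-- If an arrangement has an even, positive number of heads-up coins, then
every move leads to a non-removable arrangement; hence the arrangement itself
is not removable. -/
theorem linear_gaps_even_heads_not_removable (A : List Bool)
    (heven : Even (A.count true)) (hpos : 0 < A.count true) :
    (∀ B, gStep (A.map some) B → ¬ gRemovable B) ∧ ¬ gRemovable (A.map some) := by
  have hA : A ≠ [] := by
    rintro rfl
    simp at hpos
  have hone : coinParity false (A.map some) = 1 := by
    rw [coinParity_map_some hA, heven.natCast_zmod_two, zero_add]
  exact ⟨fun B hB => not_gRemovable_of_coinParity_eq_one ((coinParity_eq_of_gStep hB).trans hone),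
    not_gRemovable_of_coinParity_eq_one hone⟩
end

section
/- In the no-gaps linear coin-removal game, the sequence consisting of n heads-up coins (1^n) is removable if and only if n is congruent to 0 or 1 modulo 3. -/
/-- Flip the entry at index `j` (no-op if out of range). -/
def ngFlip (l : List Bool) (j : ℕ) : List Bool :=
  l.set j (!(l.getD j false))

/-- One move in the no-gaps linear coin-removal game: remove a `true` entry at
position `i`, flipping the adjacent entries (if they exist) and closing the gap. -/
def ngStep (A B : List Bool) : Prop :=
  ∃ i, i < A.length ∧ A.getD i false = true ∧
    B = ((ngFlip (ngFlip A (i + 1)) (i - 1)).eraseIdx i)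

/-- `Reducible A B`: some sequence of moves transforms `A` into `B`. -/
def Reducible : List Bool → List Bool → Prop :=
  Relation.ReflTransGen ngStep

/-- A sequence is removable if it reduces to the empty list. -/
def Removable (A : List Bool) : Prop :=
  Reducible A []

/-- Transition function of a 3-state automaton whose output is invariant
under moves of the game. -/
def ngDfa : Fin 3 → Bool → Fin 3
  | 0, false => 1
  | 0, true => 2
  | 1, _ => 0
  | 2, false => 2
  | 2, true => 1

def ngRun (s : Fin 3) (l : List Bool) : Fin 3 := l.foldl ngDfa s

def ngOut : Fin 3 → Bool
  | 1 => true
  | _ => false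

/-- The invariant. -/
def ngInv (l : List Bool) : Bool := ngOut (ngRun 0 l)

lemma ngRun_cons (s : Fin 3) (a : Bool) (l : List Bool) :
    ngRun s (a :: l) = ngRun (ngDfa s a) l := rfl

lemma L1 : ∀ (s : Fin 3) (a b : Bool),
    ngDfa (ngDfa (ngDfa s a) true) b = ngDfa (ngDfa s (!a)) (!b) := by decide

lemma L2 : ∀ (s : Fin 3) (a : Bool),
    ngOut (ngDfa (ngDfa s a) true) = ngOut (ngDfa s (!a)) := by decide

lemma L3 : ∀ b : Bool, ngDfa (ngDfa 0 true) b = ngDfa 0 (!b) := by decide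

lemma L5 : ∀ s : Fin 3, ngDfa (ngDfa (ngDfa s true) true) true = s := by decide

lemma ngFlip_cons_succ (a : Bool) (l : List Bool) (j : ℕ) :
    ngFlip (a :: l) (j + 1) = a :: ngFlip l j := by
  simp [ngFlip]

/-- Invariance for moves at position `i + 1` (so a left neighbour exists);
uniform in the starting state. -/
lemma aux_inner : ∀ (i : ℕ) (A : List Bool), i + 1 < A.length →
    A.getD (i + 1) false = true → ∀ s : Fin 3,
    ngOut (ngRun s ((ngFlip (ngFlip A (i + 2)) i).eraseIdx (i + 1))) =
      ngOut (ngRun s A) := by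
  intro i
  induction i with
  | zero =>
    intro A hlen hget s
    match A, hlen with
    | a :: c :: rest, _ =>
      have hc : c = true := hget
      subst hc
      match rest with
      | [] => exact (L2 s a).symm
      | b :: Q =>
        show ngOut (ngRun s ((!a) :: (!b) :: Q)) = _
        rw [ngRun_cons, ngRun_cons, ngRun_cons, ngRun_cons, ngRun_cons, ← L1]
  | succ j ih =>
    intro A hlen hget s
    match A, hlen with
    | a :: A', hl =>
      have h1 : j + 1 < A'.length := by
        simp only [List.length_cons] at hl; omega
      have h2 : A'.getD (j + 1) false = true := hget
      have := ih A' h1 h2 (ngDfa s a)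
      calc ngOut (ngRun s ((ngFlip (ngFlip (a :: A') (j + 3)) (j + 1)).eraseIdx (j + 2)))
          = ngOut (ngRun s (a :: (ngFlip (ngFlip A' (j + 2)) j).eraseIdx (j + 1))) := by
            rw [show (j + 3) = (j + 2) + 1 from rfl, ngFlip_cons_succ, ngFlip_cons_succ]
            rfl
        _ = ngOut (ngRun s (a :: A')) := by rw [ngRun_cons, this, ngRun_cons]

lemma ngInv_step {A B : List Bool} (h : ngStep A B) : ngInv B = ngInv A := by
  obtain ⟨i, hlen, hget, rfl⟩ := h
  cases i with
  | zero =>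
    match A, hlen with
    | c :: rest, _ =>
      have hc : c = true := hget
      subst hc
      match rest with
      | [] => rfl
      | b :: Q =>
        show ngOut (ngRun 0 ((!b) :: Q)) = ngOut (ngRun 0 (true :: b :: Q))
        rw [ngRun_cons, ngRun_cons, ngRun_cons, L3]
  | succ j =>
    exact aux_inner j A hlen hget 0

lemma ngInv_of_removable {A : List Bool} (h : Removable A) : ngInv A = false := by
  unfold Removable Reducible at h
  induction h using Relation.ReflTransGen.head_induction_on with
  | refl => rfl
  | head hstep _ ih => rw [← ngInv_step hstep]; exact ih

lemma ngRun_replicate_add_three (n : ℕ) (s : Fin 3) :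
    ngRun s (List.replicate (n + 3) true) = ngRun s (List.replicate n true) := by
  show ngRun s (true :: true :: true :: List.replicate n true) = _
  rw [ngRun_cons, ngRun_cons, ngRun_cons, L5]

lemma ngInv_replicate_two_mod (n : ℕ) (h : n % 3 = 2) :
    ngInv (List.replicate n true) = true := by
  induction n using Nat.strong_induction_on with
  | _ n ih =>
    match n, h with
    | 2, _ => rfl
    | (m + 3), h =>
      have hm : m % 3 = 2 := by omega
      unfold ngInv
      rw [ngRun_replicate_add_three]
      exact ih m (by omega) hm

/-- Three moves take `1^(n+3)` to `1^n`. -/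
lemma red3 (n : ℕ) :
    Reducible (List.replicate (n + 3) true) (List.replicate n true) := by
  have s1 : ngStep (List.replicate (n + 3) true) (false :: true :: List.replicate n true) := by
    refine ⟨0, by simp, rfl, ?_⟩
    show _ = ((ngFlip (ngFlip (true :: true :: true :: List.replicate n true) 1) 0).eraseIdx 0)
    rfl
  cases n with
  | zero =>
    have s2 : ngStep (false :: true :: List.replicate 0 true) [true] := by
      exact ⟨1, by simp, rfl, rfl⟩
    have s3 : ngStep [true] ([] : List Bool) := ⟨0, by simp, rfl, rfl⟩
    exact (Relation.ReflTransGen.head s1 (Relation.ReflTransGen.head s2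
      (Relation.ReflTransGen.single s3)))
  | succ m =>
    have s2 : ngStep (false :: true :: List.replicate (m + 1) true)
        (true :: false :: List.replicate m true) := by
      refine ⟨1, by simp, rfl, ?_⟩
      show _ = ((ngFlip (ngFlip (false :: true :: true :: List.replicate m true) 2) 0).eraseIdx 1)
      rfl
    have s3 : ngStep (true :: false :: List.replicate m true)
        (List.replicate (m + 1) true) := by
      refine ⟨0, by simp, rfl, ?_⟩
      rfl
    exact (Relation.ReflTransGen.head s1 (Relation.ReflTransGen.head s2
      (Relation.ReflTransGen.single s3)))

lemma removable_replicate (n : ℕ) (h : n % 3 = 0 ∨ n % 3 = 1) :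
    Removable (List.replicate n true) := by
  induction n using Nat.strong_induction_on with
  | _ n ih =>
    match n, h with
    | 0, _ => exact Relation.ReflTransGen.refl
    | 1, _ => exact Relation.ReflTransGen.single ⟨0, by simp, rfl, rfl⟩
    | 2, h => omega
    | (m + 3), h =>
      have hm : m % 3 = 0 ∨ m % 3 = 1 := by omega
      exact Relation.ReflTransGen.trans (red3 m) (ih m (by omega) hm)

/-- In the no-gaps game, `1^n` is removable iff `n ≡ 0` or `1 (mod 3)`. -/
theorem allOnes_removable_iff (n : ℕ) :
    Removable (List.replicate n true) ↔ n % 3 = 0 ∨ n % 3 = 1 := by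
  constructor
  · intro h
    by_contra hc
    push_neg at hc
    have h2 : n % 3 = 2 := by omega
    have := ngInv_of_removable h
    rw [ngInv_replicate_two_mod n h2] at this
    exact Bool.true_eq_false.mp this
  · exact removable_replicate n
end

section
/- In the no-gaps linear coin-removal game, for any m ≥ n ≥ 1 and any sequence C, the sequence 1^m 0 1^n C is reducible to the sequence 1^(m-n) 0 C. -/
lemma rep_set (k j : ℕ) (b : Bool) (rest : List Bool) :
    (List.replicate k true ++ rest).set (k + j) b = List.replicate k true ++ rest.set j b := by
  induction k with
  | zero => simp
  | succ k ih => simp [List.replicate_succ, Nat.succ_add, ih]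

lemma rep_getD (k j : ℕ) (rest : List Bool) :
    (List.replicate k true ++ rest).getD (k + j) false = rest.getD j false := by
  induction k with
  | zero => simp
  | succ k ih =>
    rw [List.replicate_succ, List.cons_append, Nat.succ_add, List.getD_cons_succ, ih]

lemma rep_erase (k j : ℕ) (rest : List Bool) :
    (List.replicate k true ++ rest).eraseIdx (k + j) = List.replicate k true ++ rest.eraseIdx j := by
  induction k with
  | zero => simp
  | succ k ih =>
    rw [List.replicate_succ, List.cons_append, Nat.succ_add, List.eraseIdx_cons_succ, ih, List.cons_append]

lemma rep_getD0 (k : ℕ) (rest : List Bool) :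
    (List.replicate k true ++ rest).getD k false = rest.getD 0 false := by
  simpa using rep_getD k 0 rest

lemma rep_set0 (k : ℕ) (b : Bool) (rest : List Bool) :
    (List.replicate k true ++ rest).set k b = List.replicate k true ++ rest.set 0 b := by
  simpa using rep_set k 0 b rest

lemma stepA (m n : ℕ) (C : List Bool) :
    ngStep (List.replicate m true ++ [false] ++ List.replicate (n+2) true ++ C)
           (List.replicate (m+1) true ++ [false] ++ List.replicate n true ++ C) := by
  have hL : List.replicate m true ++ [false] ++ List.replicate (n+2) true ++ C
      = List.replicate m true ++ (false :: true :: true :: (List.replicate n true ++ C)) := by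
    simp [List.replicate_succ]
  refine ⟨m + 1, ?_, ?_, ?_⟩
  · simp
  · rw [hL]; have := rep_getD m 1 (false :: true :: true :: (List.replicate n true ++ C)); simpa using this
  · rw [hL]
    have h1 : ngFlip (List.replicate m true ++ false :: true :: true :: (List.replicate n true ++ C)) (m+2)
        = List.replicate m true ++ false :: true :: false :: (List.replicate n true ++ C) := by
      rw [ngFlip, rep_getD m 2, rep_set m 2]; simp
    have h2 : ngFlip (List.replicate m true ++ false :: true :: false :: (List.replicate n true ++ C)) m
        = List.replicate m true ++ true :: true :: false :: (List.replicate n true ++ C) := by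
      rw [ngFlip, rep_getD0, rep_set0]; simp
    show _ = ((ngFlip (ngFlip _ (m+2)) ((m+1)-1)).eraseIdx (m+1))
    rw [h1, show (m+1)-1 = m from rfl, h2, rep_erase m 1]
    simp [List.replicate_succ']

lemma stepB (k n : ℕ) (C : List Bool) :
    ngStep (List.replicate (k+2) true ++ [false] ++ List.replicate n true ++ C)
           (List.replicate k true ++ [false] ++ List.replicate (n+1) true ++ C) := by
  have hL : List.replicate (k+2) true ++ [false] ++ List.replicate n true ++ C
      = List.replicate k true ++ (true :: true :: false :: (List.replicate n true ++ C)) := by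
    simp [List.replicate_succ']
  refine ⟨k + 1, ?_, ?_, ?_⟩
  · simp; omega
  · rw [hL]; have := rep_getD k 1 (true :: true :: false :: (List.replicate n true ++ C)); simpa using this
  · rw [hL]
    have h1 : ngFlip (List.replicate k true ++ true :: true :: false :: (List.replicate n true ++ C)) (k+2)
        = List.replicate k true ++ true :: true :: true :: (List.replicate n true ++ C) := by
      rw [ngFlip, rep_getD k 2, rep_set k 2]; simp
    have h2 : ngFlip (List.replicate k true ++ true :: true :: true :: (List.replicate n true ++ C)) k
        = List.replicate k true ++ false :: true :: true :: (List.replicate n true ++ C) := by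
      rw [ngFlip, rep_getD0, rep_set0]; simp
    show _ = ((ngFlip (ngFlip _ (k+2)) ((k+1)-1)).eraseIdx (k+1))
    rw [h1, show (k+1)-1 = k from rfl, h2, rep_erase k 1]
    simp [List.replicate_succ]

lemma baseStep1 (C : List Bool) :
    ngStep (true :: false :: true :: C) (true :: true :: C) :=
  ⟨0, by simp, by simp, by simp [ngFlip]⟩

lemma baseStep2 (C : List Bool) :
    ngStep (true :: true :: C) (false :: C) :=
  ⟨0, by simp, by simp, by simp [ngFlip]⟩

lemma main (n : ℕ) : ∀ m C, 1 ≤ n → n ≤ m →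
    Reducible (List.replicate m true ++ [false] ++ List.replicate n true ++ C)
              (List.replicate (m - n) true ++ [false] ++ C) := by
  induction n with
  | zero => intro m C h _; omega
  | succ n ih =>
    intro m C _ hmn
    cases n with
    | zero =>
      match m, hmn with
      | 1, _ =>
        have : Reducible (true :: false :: true :: C) (false :: C) :=
          .head (baseStep1 C) (.single (baseStep2 C))
        simpa using this
      | (k+2), _ =>
        refine .head (stepB k 1 C) (.single ?_)
        have := stepA k 0 C
        simpa using this
    | succ n' =>
      obtain ⟨k, rfl⟩ : ∃ k, m = k + 2 := ⟨m - 2, by omega⟩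
      refine .head (stepA (k+2) n' C) (.head (stepB (k+1) n' C) ?_)
      have h := ih (k+1) C (by omega) (by omega)
      have he : k + 1 - (n' + 1) = k + 2 - (n' + 1 + 1) := by omega
      rwa [he] at h

/-- For `m ≥ n ≥ 1`, `1^m 0 1^n C` is reducible to `1^(m-n) 0 C`. -/
theorem obs2_single_zero (m n : ℕ) (hn : 1 ≤ n) (hmn : n ≤ m) (C : List Bool) :
    Reducible
      (List.replicate m true ++ [false] ++ List.replicate n true ++ C)
      (List.replicate (m - n) true ++ [false] ++ C) := by
  exact main n m C hn hmn
end

section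
/- Let A be a coin sequence containing at least one 1, written as A = 1^{h_0} 0^{t_1} 1^{h_1} ⋯ 0^{t_n} 1^{h_n}, define p_i = (t_1 + ⋯ + t_i) mod 2 and the parity sum S(A) = h_0 + Σ_{i=1}^n (−1)^{p_i} h_i − p_n. Then the residue class of S(A) modulo 3 being equal to 2 is independent of the choice of decomposition (h_0,…,h_n), (t_1,…,t_n) of A. -/
/-- The coin sequence `1^{h 0} 0^{t 1} 1^{h 1} ⋯ 0^{t n} 1^{h n}`. -/
def buildSeq (n : ℕ) (h t : ℕ → ℕ) : List Bool :=
  List.replicate (h 0) true ++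
    ((List.range n).map
      (fun i => List.replicate (t (i + 1)) false ++ List.replicate (h (i + 1)) true)).flatten

/-- The parity of `t 1 + ⋯ + t i`. -/
def par (t : ℕ → ℕ) (i : ℕ) : ℕ :=
  (∑ j ∈ Finset.Icc 1 i, t j) % 2

/-- The parity sum `S = h₀ + ∑_{i=1}^n (-1)^{pᵢ} hᵢ - pₙ` of a decomposition. -/
def psum (n : ℕ) (h t : ℕ → ℕ) : ℤ :=
  (h 0 : ℤ) + (∑ i ∈ Finset.Icc 1 n, (-1 : ℤ) ^ (par t i) * (h i : ℤ)) - (par t n : ℤ)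

/-!
The parity sum is an invariant of the sequence itself, not only its residue modulo 3.
Read `A` from left to right with a sign that starts at `+1` and flips at every `0`, and add
the current sign at every `1`: the result is `h₀ + ∑ (-1)^{pᵢ} hᵢ`, while `pₙ` is the parity
of the number of `0`s of `A`.
-/

def signedTrueCount (s : ℤ) : List Bool → ℤ
  | [] => 0
  | true :: l => s + signedTrueCount s l
  | false :: l => signedTrueCount (-s) l

lemma signedTrueCount_append (s : ℤ) (l₁ l₂ : List Bool) :
    signedTrueCount s (l₁ ++ l₂) =
      signedTrueCount s l₁ + signedTrueCount (s * (-1) ^ l₁.count false) l₂ := by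
  induction l₁ generalizing s with
  | nil => simp [signedTrueCount]
  | cons b l ih =>
    cases b <;> simp only [List.cons_append, signedTrueCount, List.count_cons, ih]
    · simp [pow_succ]
    · simp; ring

lemma signedTrueCount_replicate_true (s : ℤ) (k : ℕ) :
    signedTrueCount s (List.replicate k true) = s * k := by
  induction k with
  | zero => simp [signedTrueCount]
  | succ k ih => simp [List.replicate_succ, signedTrueCount, ih]; ring

lemma signedTrueCount_replicate_false (s : ℤ) (k : ℕ) :
    signedTrueCount s (List.replicate k false) = 0 := by
  induction k generalizing s with
  | zero => simp [signedTrueCount]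
  | succ k ih => simp [List.replicate_succ, signedTrueCount, ih]

lemma buildSeq_succ (n : ℕ) (h t : ℕ → ℕ) :
    buildSeq (n + 1) h t =
      buildSeq n h t ++ (List.replicate (t (n + 1)) false ++ List.replicate (h (n + 1)) true) := by
  simp [buildSeq, List.range_succ]

lemma count_false_buildSeq (n : ℕ) (h t : ℕ → ℕ) :
    (buildSeq n h t).count false = ∑ i ∈ Finset.Icc 1 n, t i := by
  induction n with
  | zero => simp [buildSeq, List.count_replicate]
  | succ n ih =>
    rw [buildSeq_succ, List.count_append, List.count_append, ih,
      Finset.sum_Icc_succ_top (by omega)]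
    simp [List.count_replicate]

lemma signedTrueCount_buildSeq (n : ℕ) (h t : ℕ → ℕ) :
    signedTrueCount 1 (buildSeq n h t) =
      h 0 + ∑ i ∈ Finset.Icc 1 n, (-1 : ℤ) ^ (∑ j ∈ Finset.Icc 1 i, t j) * h i := by
  induction n with
  | zero => simp [buildSeq, signedTrueCount_replicate_true]
  | succ n ih =>
    rw [buildSeq_succ, signedTrueCount_append, ih, signedTrueCount_append,
      signedTrueCount_replicate_false, signedTrueCount_replicate_true, count_false_buildSeq,
      Finset.sum_Icc_succ_top (by omega), Finset.sum_Icc_succ_top (by omega)]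
    simp [pow_add]
    ring

lemma psum_eq_signedTrueCount_sub (n : ℕ) (h t : ℕ → ℕ) :
    psum n h t =
      signedTrueCount 1 (buildSeq n h t) - ((buildSeq n h t).count false % 2 : ℕ) := by
  rw [signedTrueCount_buildSeq, count_false_buildSeq, psum]
  simp only [par, ← neg_one_pow_eq_pow_mod_two]

lemma psum_eq_of_buildSeq_eq {n₁ n₂ : ℕ} {h₁ t₁ h₂ t₂ : ℕ → ℕ}
    (hA : buildSeq n₁ h₁ t₁ = buildSeq n₂ h₂ t₂) : psum n₁ h₁ t₁ = psum n₂ h₂ t₂ := by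
  rw [psum_eq_signedTrueCount_sub, psum_eq_signedTrueCount_sub, hA]

theorem psum_mod_three_well_defined_general (A : List Bool)
    (n₁ n₂ : ℕ) (h₁ t₁ h₂ t₂ : ℕ → ℕ)
    (hd₁ : buildSeq n₁ h₁ t₁ = A) (hd₂ : buildSeq n₂ h₂ t₂ = A) :
    psum n₁ h₁ t₁ % 3 = 2 ↔ psum n₂ h₂ t₂ % 3 = 2 := by
  rw [psum_eq_of_buildSeq_eq (hd₁.trans hd₂.symm)]

/-- For a coin sequence containing at least one `1`, whether the parity sum is
`≡ 2 (mod 3)` does not depend on the chosen decomposition. -/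
theorem psum_mod_three_well_defined (A : List Bool) (hA : true ∈ A)
    (n₁ n₂ : ℕ) (h₁ t₁ h₂ t₂ : ℕ → ℕ) (hn₁ : 1 ≤ n₁) (hn₂ : 1 ≤ n₂)
    (hd₁ : buildSeq n₁ h₁ t₁ = A) (hd₂ : buildSeq n₂ h₂ t₂ = A) :
    psum n₁ h₁ t₁ % 3 = 2 ↔ psum n₂ h₂ t₂ % 3 = 2 :=
  psum_mod_three_well_defined_general A n₁ n₂ h₁ t₁ h₂ t₂ hd₁ hd₂
end

section
/- If A is a coin sequence containing at least one heads-up coin and A^R is the reversal of A, then S(A) ≡ 2 (mod 3) if and only if S(A^R) ≡ 2 (mod 3). -/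
/-- Signed sum of the `true` entries of a list, the sign toggling at each `false`. -/
def signedSum : ℤ → List Bool → ℤ
  | _, [] => 0
  | s, (true :: l) => s + signedSum s l
  | s, (false :: l) => signedSum (-s) l

/-- The parity sum `S(A) = h₀ + ∑_{i=1}^n (-1)^{pᵢ} hᵢ - pₙ`, where
`A = 1^{h₀} 0^{t₁} 1^{h₁} ⋯ 0^{tₙ} 1^{hₙ}` and `pᵢ ≡ t₁ + ⋯ + tᵢ (mod 2)`. -/
def pS (A : List Bool) : ℤ :=
  signedSum 1 A - ((A.count false % 2 : ℕ) : ℤ)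

/-!
Reading a coin sequence backwards flips the sign of every head exactly when the number `c` of
tails is odd, so the signed sum of the reversal is `(-1)^c` times that of `A`. Hence
`S(Aᴿ) = S(A)` for even `c` and `S(Aᴿ) = -S(A) - 2` for odd `c`, and `x ↦ -x - 2` fixes the
residue `2` modulo `3`.
-/

lemma signedSum_append_singleton (l : List Bool) (s : ℤ) (b : Bool) :
    signedSum s (l ++ [b]) = signedSum s l + if b then s * (-1) ^ l.count false else 0 := by
  induction l generalizing s with
  | nil => cases b <;> simp [signedSum]
  | cons a t ih => cases a <;> cases b <;> simp [signedSum, ih, pow_succ]; ring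

lemma signedSum_eq_mul_signedSum_one (l : List Bool) (s : ℤ) :
    signedSum s l = s * signedSum 1 l := by
  induction l generalizing s with
  | nil => simp [signedSum]
  | cons a t ih => cases a <;> simp [signedSum, ih s, ih (-s), ih (-1)]; ring

lemma signedSum_one_reverse (l : List Bool) :
    signedSum 1 l.reverse = (-1) ^ l.count false * signedSum 1 l := by
  induction l with
  | nil => simp [signedSum]
  | cons a t ih =>
    cases a <;>
      simp [signedSum, signedSum_append_singleton, ih, pow_succ,
        signedSum_eq_mul_signedSum_one t (-1)]; ring

lemma pS_reverse_of_even {A : List Bool} (h : Even (A.count false)) : pS A.reverse = pS A := by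
  rw [pS, pS, List.count_reverse, signedSum_one_reverse, h.neg_one_pow, one_mul]

lemma pS_reverse_of_odd {A : List Bool} (h : Odd (A.count false)) :
    pS A.reverse = -pS A - 2 := by
  rw [pS, pS, List.count_reverse, signedSum_one_reverse, h.neg_one_pow, Nat.odd_iff.mp h]
  ring

theorem pS_reverse_mod_three_general (A : List Bool) :
    pS A % 3 = 2 ↔ pS A.reverse % 3 = 2 := by
  rcases Nat.even_or_odd (A.count false) with h | h
  · rw [pS_reverse_of_even h]
  · rw [pS_reverse_of_odd h]
    omega

/-- For a coin sequence `A` with at least one heads-up coin,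
`S(A) ≡ 2 (mod 3)` iff `S(Aᴿ) ≡ 2 (mod 3)`. -/
theorem pS_reverse_mod_three (A : List Bool) (hA : true ∈ A) :
    pS A % 3 = 2 ↔ pS A.reverse % 3 = 2 :=
  pS_reverse_mod_three_general A
end

section
/- With notation as in the reversal lemma: if the total number of 0's in A is even then S(A^R) = S(A), and if the total number of 0's in A is odd then S(A^R) + S(A) = −2. -/
lemma signedSum_hom (s : ℤ) (l : List Bool) : signedSum s l = s * signedSum 1 l := by
  induction l generalizing s with
  | nil => simp [signedSum]
  | cons a l ih =>
    cases a <;> simp only [signedSum]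
    · rw [ih (-s), ih (-1)]; ring
    · rw [ih s, ih 1]; ring

lemma signedSum_append (s : ℤ) (l l' : List Bool) :
    signedSum s (l ++ l') = signedSum s l + signedSum (s * (-1) ^ (l.count false)) l' := by
  induction l generalizing s with
  | nil => simp [signedSum]
  | cons a l ih =>
    cases a <;>
      simp only [List.cons_append, signedSum, List.count_cons, List.append_eq] <;>
      rw [ih] <;> simp
    · rw [signedSum_hom (-(s * (-1) ^ l.count false)) l',
        signedSum_hom (s * (-1) ^ (l.count false + 1)) l']
      ring
    · ring

lemma signedSum_reverse (A : List Bool) :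
    signedSum 1 A.reverse = (-1) ^ (A.count false) * signedSum 1 A := by
  induction A with
  | nil => simp [signedSum]
  | cons a l ih =>
    rw [List.reverse_cons, signedSum_append, ih]
    cases a <;>
      simp only [signedSum, List.count_cons, List.count_reverse, one_mul] <;> simp
    · rw [signedSum_hom (-1) l]; ring
    · ring

/-- If the number of `0`s in `A` is even then `S(Aᴿ) = S(A)`;
if it is odd then `S(Aᴿ) + S(A) = -2`. -/
theorem pS_reverse_eq (A : List Bool) (hA : true ∈ A) :
    (Even (A.count false) → pS A.reverse = pS A) ∧
    (Odd (A.count false) → pS A.reverse + pS A = -2) := by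
  constructor <;> intro h <;>
    simp only [pS, signedSum_reverse, List.count_reverse]
  · rw [h.neg_one_pow, Nat.even_iff.mp h]
    ring
  · rw [h.neg_one_pow, Nat.odd_iff.mp h]
    push_cast
    ring
end

section
/- If A = 1 0 D (a single 1 followed by a 0 and a sequence D containing at least one 1), and A' = 1 D is obtained by removing the leading 1, then S(A') + S(A) = 1. -/
lemma signedSum_neg (l : List Bool) : ∀ s, signedSum (-s) l = - signedSum s l := by
  induction l with
  | nil => intro s; simp [signedSum]
  | cons b l ih =>
    intro s
    cases b <;> simp [signedSum, ih, neg_add] <;> ring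

/-- If `A = 1 0 D` with `D` containing a `1`, and `A' = 1 D` results from
removing the leading `1` (which flips the `0`), then `S(A') + S(A) = 1`. -/
theorem pS_case_one (D : List Bool) (hD : true ∈ D) :
    pS (true :: D) + pS (true :: false :: D) = 1 := by
  simp only [pS, signedSum, List.count_cons]
  rw [show (-1 : ℤ) = -(1:ℤ) from rfl, signedSum_neg]
  have h : D.count false % 2 + (D.count false + 1) % 2 = 1 := by omega
  norm_num
  push_cast
  omega
end

section
/- In the no-gaps linear coin-removal game, if a sequence A is removable, then any heads-up coin whose removal either removes all coins or leaves at least one heads-up coin present yields a removable sequence; in particular, removability can be decided and witnessed in polynomially many greedy moves. -/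
/-! ### Auxiliary machinery -/

/-- Flip the first entry of a list (no-op on `[]`). -/
def flipHead : List Bool → List Bool
  | [] => []
  | a :: l => (!a) :: l

/-- Flip the last entry of a list (no-op on `[]`). -/
def flipLast : List Bool → List Bool
  | [] => []
  | [a] => [!a]
  | a :: b :: l => a :: flipLast (b :: l)

def ngVal (c : Bool) : ZMod 3 := cond c 2 1

/-- The `ZMod 3` invariant. -/
def ngF : Bool → List Bool → ZMod 3
  | c, [] => ngVal c
  | c, a :: l => ngVal c + ngF (xor c (!a)) l

lemma ngF_not (l : List Bool) : ∀ c, ngF (!c) l = - ngF c l := by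
  induction l with
  | nil => intro c; cases c <;> decide
  | cons a l ih =>
    intro c
    have h3 : (3 : ZMod 3) = 0 := by decide
    cases c <;> cases a <;>
      simp [ngF, ngVal] <;>
      rw [show (true : Bool) = !false from rfl, ih] <;>
      first
        | linear_combination h3
        | linear_combination -h3
        | linear_combination 2 * h3
        | linear_combination -(2 * h3)

lemma flipLast_length : ∀ l : List Bool, (flipLast l).length = l.length := by
  intro l
  induction l with
  | nil => rfl
  | cons a l ih =>
    cases l with
    | nil => rfl
    | cons b m => simpa [flipLast] using ih

lemma ngF_flipHead (R : List Bool) (c : Bool) :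
    ngF c (flipHead R) = - ngF c (true :: R) := by
  cases R with
  | nil => cases c <;> decide
  | cons a R2 =>
    have h3 : (3 : ZMod 3) = 0 := by decide
    cases c <;> cases a <;>
      simp [flipHead, ngF, ngVal] <;>
      rw [show (true : Bool) = !false from rfl, ngF_not] <;>
      first
        | linear_combination h3
        | linear_combination -h3
        | linear_combination 2 * h3
        | linear_combination -(2 * h3)

lemma ngF_move (L : List Bool) : ∀ c R, L ≠ [] →
    ngF c (flipLast L ++ flipHead R) = ngF c (L ++ true :: R) := by
  induction L with
  | nil => intro c R h; exact absurd rfl h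
  | cons b L2 ih =>
    intro c R _
    cases L2 with
    | nil =>
      have h3 : (3 : ZMod 3) = 0 := by decide
      cases b <;> cases c <;>
        simp [flipLast, ngF, ngVal, ngF_flipHead] <;>
        (try rw [show (true : Bool) = !false from rfl, ngF_not]) <;>
        first
          | linear_combination h3
          | linear_combination -h3
          | linear_combination 2 * h3
          | linear_combination -(2 * h3)
          | rfl
    | cons b2 L3 =>
      have h := ih (xor c (!b)) R (by simp)
      calc ngF c (flipLast (b :: b2 :: L3) ++ flipHead R)
          = ngVal c + ngF (xor c (!b)) (flipLast (b2 :: L3) ++ flipHead R) := rfl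
        _ = ngVal c + ngF (xor c (!b)) ((b2 :: L3) ++ true :: R) := by rw [h]
        _ = ngF c ((b :: b2 :: L3) ++ true :: R) := rfl

/-- Combined invariance up to sign. -/
lemma ngF_inv (L R : List Bool) :
    ngF false (flipLast L ++ flipHead R) = ngF false (L ++ true :: R) ∨
    ngF false (flipLast L ++ flipHead R) = - ngF false (L ++ true :: R) := by
  cases L with
  | nil => right; simpa [flipLast] using ngF_flipHead R false
  | cons b L2 => left; exact ngF_move (b :: L2) false R (by simp)

lemma ngFlip_zero (l : List Bool) : ngFlip l 0 = flipHead l := by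
  cases l <;> simp [ngFlip, flipHead]

/-- The key computational identity: a move at position `L.length` of
`L ++ true :: R` yields `flipLast L ++ flipHead R`. -/
lemma move_eq : ∀ (L R : List Bool),
    ((ngFlip (ngFlip (L ++ true :: R) (L.length + 1)) (L.length - 1)).eraseIdx L.length)
      = flipLast L ++ flipHead R := by
  intro L
  induction L with
  | nil =>
    intro R
    cases R <;> simp [ngFlip, flipHead, flipLast, List.eraseIdx]
  | cons b L2 ih =>
    intro R
    cases L2 with
    | nil =>
      cases R <;> simp [ngFlip, flipHead, flipLast, List.eraseIdx]
    | cons b2 L3 =>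
      have hlen : (b2 :: L3).length - 1 + 1 = (b2 :: L3).length := by simp
      calc ((ngFlip (ngFlip ((b :: b2 :: L3) ++ true :: R) ((b :: b2 :: L3).length + 1))
              ((b :: b2 :: L3).length - 1)).eraseIdx (b :: b2 :: L3).length)
          = b :: ((ngFlip (ngFlip ((b2 :: L3) ++ true :: R) ((b2 :: L3).length + 1))
              ((b2 :: L3).length - 1)).eraseIdx (b2 :: L3).length) := by
            rw [show ((b :: b2 :: L3) ++ true :: R) = b :: ((b2 :: L3) ++ true :: R) from rfl]
            rw [show (b :: b2 :: L3).length + 1 = ((b2 :: L3).length + 1) + 1 from rfl]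
            rw [ngFlip_cons_succ]
            rw [show (b :: b2 :: L3).length - 1 = ((b2 :: L3).length - 1) + 1 from by simp]
            rw [ngFlip_cons_succ]
            rfl
        _ = b :: (flipLast (b2 :: L3) ++ flipHead R) := by rw [ih]
        _ = flipLast (b :: b2 :: L3) ++ flipHead R := rfl

lemma getD_append_len : ∀ (L : List Bool) (x : Bool) (R : List Bool),
    (L ++ x :: R).getD L.length false = x := by
  intro L x R
  induction L with
  | nil => rfl
  | cons a L ih => simpa using ih

/-- Structural form implies a step. -/
lemma structural_step (L R : List Bool) :
    ngStep (L ++ true :: R) (flipLast L ++ flipHead R) := by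
  refine ⟨L.length, by simp, getD_append_len L true R, (move_eq L R).symm⟩

/-- A step implies the structural form. -/
lemma step_structural {A B : List Bool} (h : ngStep A B) :
    ∃ L R, A = L ++ true :: R ∧ B = flipLast L ++ flipHead R := by
  obtain ⟨i, hi, hget, hB⟩ := h
  have h2 : A[i] = true := by rwa [List.getD_eq_getElem A false hi] at hget
  have hA : A = A.take i ++ true :: A.drop (i + 1) := by
    conv_lhs => rw [← List.take_append_drop i A, List.drop_eq_getElem_cons hi, h2]
  refine ⟨A.take i, A.drop (i + 1), hA, ?_⟩
  have hlen : (A.take i).length = i := by simp [Nat.min_eq_left hi.le]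
  have hme := move_eq (A.take i) (A.drop (i + 1))
  rw [hlen] at hme
  rw [hB]
  conv_lhs => rw [hA]
  exact hme

lemma flipHead_length (l : List Bool) : (flipHead l).length = l.length := by
  cases l <;> simp [flipHead]

/-- Existence of a "good" move. -/
lemma exists_good : ∀ (A : List Bool), true ∈ A → A ≠ [true, true] →
    ∃ L R, A = L ++ true :: R ∧
      (flipLast L ++ flipHead R = [] ∨ true ∈ flipLast L ++ flipHead R) := by
  intro A
  induction A with
  | nil => intro h; simp at h
  | cons a A1 ih =>
    intro hmem hne
    cases a with
    | true =>
      cases A1 with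
      | nil => exact ⟨[], [], rfl, Or.inl rfl⟩
      | cons y Y2 =>
        cases y with
        | false => exact ⟨[], false :: Y2, rfl, Or.inr (by simp [flipLast, flipHead])⟩
        | true =>
          by_cases hY : true ∈ Y2
          · exact ⟨[], true :: Y2, rfl, Or.inr (by simp [flipLast, flipHead, hY])⟩
          · cases Y2 with
            | nil => exact absurd rfl hne
            | cons z Y3 =>
              cases z with
              | true => exact absurd (by simp) hY
              | false =>
                exact ⟨[true], false :: Y3, rfl, Or.inr (by simp [flipLast, flipHead])⟩
    | false =>
      have hmem1 : true ∈ A1 := by simpa using hmem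
      by_cases h11 : A1 = [true, true]
      · subst h11
        exact ⟨[false], [true], rfl, Or.inr (by simp [flipLast, flipHead])⟩
      · obtain ⟨L', R', hA1, hres⟩ := ih hmem1 h11
        cases L' with
        | nil =>
          refine ⟨[false], R', by simp [hA1], Or.inr ?_⟩
          simp [flipLast, flipHead]
        | cons b L2 =>
          refine ⟨false :: b :: L2, R', by simp [hA1], Or.inr ?_⟩
          rcases hres with h0 | hmem'
          · exfalso
            have hl := congrArg List.length h0
            simp [flipLast_length, flipHead_length] at hl
          · simp only [flipLast, List.cons_append, List.mem_cons]
            exact Or.inr hmem'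

/-- Sufficiency: nonzero invariant plus a head implies removable. -/
lemma ng_suff : ∀ (n : ℕ) (A : List Bool), A.length ≤ n → true ∈ A →
    ngF false A ≠ 0 → Removable A := by
  intro n
  induction n with
  | zero =>
    intro A hlen hmem _
    have : A = [] := List.eq_nil_of_length_eq_zero (Nat.le_zero.mp hlen)
    subst this; simp at hmem
  | succ n ih =>
    intro A hlen hmem hF
    have hne : A ≠ [true, true] := by rintro rfl; exact hF (by decide)
    obtain ⟨L, R, hA, hres⟩ := exists_good A hmem hne
    have hstep : ngStep A (flipLast L ++ flipHead R) := hA ▸ structural_step L R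
    have hFB : ngF false (flipLast L ++ flipHead R) ≠ 0 := by
      rcases ngF_inv L R with h | h
      · rw [h, ← hA]; exact hF
      · rw [h, ← hA]; exact neg_ne_zero.mpr hF
    rcases hres with h0 | hmem'
    · rw [h0] at hstep
      exact Relation.ReflTransGen.single hstep
    · have hlenB : (flipLast L ++ flipHead R).length ≤ n := by
        have h1 : A.length = L.length + R.length + 1 := by simp [hA]; ring
        have h2 : (flipLast L ++ flipHead R).length = L.length + R.length := by
          simp [flipLast_length, flipHead_length]
        omega
      exact Relation.ReflTransGen.head hstep (ih _ hlenB hmem' hFB)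

/-- Necessity: removable implies nonzero invariant. -/
lemma ng_nec : ∀ (A : List Bool), Removable A → ngF false A ≠ 0 := by
  intro A h
  induction h using Relation.ReflTransGen.head_induction_on with
  | refl => decide
  | head hstep _ ihp =>
    rename_i X Y _
    obtain ⟨L, R, hX, hY⟩ := step_structural hstep
    rcases ngF_inv L R with h' | h'
    · rw [hX]; rw [hY, h'] at ihp; exact ihp
    · rw [hX]; rw [hY, h'] at ihp
      intro h0; rw [h0] at ihp; simp at ihp

/-- Greedy strategy: if `A` is removable and a move produces `A'` which is
either empty or still contains a heads-up coin, then `A'` is removable. -/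
theorem greedy_move_removable (A A' : List Bool) (hA : Removable A)
    (hstep : ngStep A A') (h' : A' = [] ∨ true ∈ A') :
    Removable A' := by
  have hFA := ng_nec A hA
  obtain ⟨L, R, hA1, hB⟩ := step_structural hstep
  have hFB : ngF false A' ≠ 0 := by
    rw [hB]
    rcases ngF_inv L R with h | h
    · rw [h, ← hA1]; exact hFA
    · rw [h, ← hA1]; exact neg_ne_zero.mpr hFA
  rcases h' with rfl | hmem
  · exact Relation.ReflTransGen.refl
  · exact ng_suff A'.length A' le_rfl hmem hFB
end

section
/- Let r_n denote the number of binary strings of length n that are removable in the no-gaps linear coin-removal game. Then r_1 = 1, r_2 = 2, and r_{n+1} = r_n + 2 r_{n-1} + 1 for all n ≥ 2. -/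
/-- `r n` is the number of removable binary sequences of length `n`. -/
noncomputable def r (n : ℕ) : ℕ :=
  Set.ncard {A : List Bool | A.length = n ∧ Removable A}

lemma ngFlip_append (u l : List Bool) (j : ℕ) :
    ngFlip (u ++ l) (u.length + j) = u ++ ngFlip l j := by
  simp [ngFlip, List.getElem?_append_right]

lemma List.exists_eq_append_cons_cons {α : Type*} {A : List α} {i : ℕ} (h : i + 1 < A.length) :
    ∃ u x y t, A = u ++ x :: y :: t ∧ u.length = i := by
  refine ⟨A.take i, A[i], A[i + 1], A.drop (i + 2), ?_, by simp; omega⟩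
  conv_lhs => rw [← List.take_append_drop i A, List.drop_eq_getElem_cons (by omega),
    List.drop_eq_getElem_cons h]

lemma eraseIdx_ngFlip_zero (t : List Bool) :
    (ngFlip (ngFlip (true :: t) 1) 0).eraseIdx 0 = t.modifyHead not := by
  cases t <;> simp [ngFlip]

lemma eraseIdx_ngFlip_succ (u : List Bool) (x y : Bool) (t : List Bool) :
    (ngFlip (ngFlip (u ++ x :: y :: t) (u.length + 2)) u.length).eraseIdx (u.length + 1) =
      u ++ (!x) :: t.modifyHead not := by
  rw [ngFlip_append, ← add_zero u.length, ngFlip_append, add_zero,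
    List.eraseIdx_append_of_length_le (by simp)]
  cases t <;> simp [ngFlip]

lemma ngStep_iff {A B : List Bool} :
    ngStep A B ↔ (∃ t, A = true :: t ∧ B = t.modifyHead not) ∨
      ∃ u x t, A = u ++ x :: true :: t ∧ B = u ++ (!x) :: t.modifyHead not := by
  constructor
  · rintro ⟨_ | i, hi, hA, rfl⟩
    · obtain _ | ⟨_ | _, t⟩ := A
      · simp at hi
      · simp at hA
      · exact .inl ⟨t, rfl, eraseIdx_ngFlip_zero t⟩
    · obtain ⟨u, x, y, t, rfl, rfl⟩ := List.exists_eq_append_cons_cons hi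
      obtain rfl : y = true := by simpa [List.getD_append_right] using hA
      exact .inr ⟨u, x, t, rfl, eraseIdx_ngFlip_succ u x true t⟩
  · rintro (⟨t, rfl, rfl⟩ | ⟨u, x, t, rfl, rfl⟩)
    · exact ⟨0, by simp, rfl, (eraseIdx_ngFlip_zero t).symm⟩
    · exact ⟨u.length + 1, by simp, by simp,
        (eraseIdx_ngFlip_succ u x true t).symm⟩

def chargeStep (x : ZMod 3) (b : Bool) : ZMod 3 := bif b then x + 1 else -x

def charge (A : List Bool) : ZMod 3 := A.foldl chargeStep (-1)

lemma chargeStep_removeMiddle (s : ZMod 3) (x y : Bool) :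
    chargeStep (chargeStep (chargeStep s x) true) y = chargeStep (chargeStep s (!x)) (!y) := by
  revert s x y; decide

lemma chargeStep_removeFirst (y : Bool) :
    chargeStep (chargeStep (-1) true) y = chargeStep (-1) (!y) := by
  revert y; decide

lemma chargeStep_removeLast (s : ZMod 3) (x : Bool) :
    chargeStep (chargeStep s x) true = 1 ↔ chargeStep s (!x) = 1 := by
  revert s x; decide

lemma ngStep.charge_eq_one_iff {A B : List Bool} (h : ngStep A B) :
    charge A = 1 ↔ charge B = 1 := by
  rcases ngStep_iff.mp h with ⟨_ | ⟨y, v⟩, rfl, rfl⟩ | ⟨u, x, _ | ⟨y, v⟩, rfl, rfl⟩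
  · decide
  · simp only [charge, List.foldl_cons, List.modifyHead_cons, chargeStep_removeFirst]
  · simp only [charge, List.foldl_append, List.foldl_cons, List.foldl_nil, List.modifyHead_nil,
      chargeStep_removeLast]
  · simp only [charge, List.foldl_append, List.foldl_cons, List.modifyHead_cons,
      chargeStep_removeMiddle]

lemma ngStep.true_mem {A B : List Bool} (h : ngStep A B) : true ∈ A := by
  rcases ngStep_iff.mp h with ⟨t, rfl, -⟩ | ⟨u, x, t, rfl, -⟩ <;> simp

lemma ngStep.length_add_one {A B : List Bool} (h : ngStep A B) : B.length + 1 = A.length := by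
  rcases ngStep_iff.mp h with ⟨t, rfl, rfl⟩ | ⟨u, x, t, rfl, rfl⟩ <;> simp +arith

lemma charge_ne_one_of_removable {A : List Bool} (h : Removable A) :
    charge A ≠ 1 ∧ (A = [] ∨ true ∈ A) := by
  induction h using Relation.ReflTransGen.head_induction_on with
  | refl => exact ⟨by decide, .inl rfl⟩
  | head hstep _ ih =>
    exact ⟨(hstep.charge_eq_one_iff).not.mpr ih.1, .inr (hstep.true_mem)⟩

lemma exists_eq_append_false_true {t : List Bool} (h : true ∈ t) :
    ∃ u v, false :: t = u ++ false :: true :: v := by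
  induction t with
  | nil => simp at h
  | cons b t ih =>
    cases b
    · obtain ⟨u, v, huv⟩ := ih (by simpa using h)
      exact ⟨false :: u, v, by rw [huv]; rfl⟩
    · exact ⟨[], t, rfl⟩

lemma exists_ngStep_of_charge_ne_one {A : List Bool} (hA : true ∈ A) (h : charge A ≠ 1) :
    ∃ B, ngStep A B ∧ (B = [] ∨ true ∈ B) := by
  match A with
  | false :: t =>
    obtain ⟨u, v, huv⟩ := exists_eq_append_false_true (by simpa using hA)
    exact ⟨_, ngStep_iff.mpr (.inr ⟨u, false, v, huv, rfl⟩), .inr (by simp)⟩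
  | [true] => exact ⟨[], ngStep_iff.mpr (.inl ⟨[], rfl, rfl⟩), .inl rfl⟩
  | true :: false :: v =>
    exact ⟨_, ngStep_iff.mpr (.inl ⟨false :: v, rfl, rfl⟩), .inr (by simp)⟩
  | [true, true] => exact absurd (by decide) h
  | true :: true :: false :: v =>
    exact ⟨_, ngStep_iff.mpr (.inr ⟨[], true, false :: v, rfl, rfl⟩), .inr (by simp)⟩
  | true :: true :: true :: v =>
    exact ⟨_, ngStep_iff.mpr (.inr ⟨[true], true, v, rfl, rfl⟩), .inr (by simp)⟩

lemma removable_of_charge_ne_one {A : List Bool} (h : charge A ≠ 1) (hA : A = [] ∨ true ∈ A) :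
    Removable A := by
  obtain rfl | hA := hA
  · exact .refl
  obtain ⟨B, hAB, hB⟩ := exists_ngStep_of_charge_ne_one hA h
  exact .head hAB (removable_of_charge_ne_one ((hAB.charge_eq_one_iff).not.mp h) hB)
termination_by A.length
decreasing_by have := hAB.length_add_one; omega

theorem removable_iff_charge_ne_one {A : List Bool} :
    Removable A ↔ charge A ≠ 1 ∧ (A = [] ∨ true ∈ A) :=
  ⟨charge_ne_one_of_removable, fun h => removable_of_charge_ne_one h.1 h.2⟩

lemma List.ncard_length_eq (α : Type*) [Fintype α] (n : ℕ) :
    {l : List α | l.length = n}.ncard = Fintype.card α ^ n := by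
  rw [← Nat.card_coe_set_eq]
  exact (Nat.card_eq_fintype_card (α := List.Vector α n)).trans (card_vector n)

lemma List.ncard_length_eq_and_add (α : Type*) [Fintype α] (n : ℕ) (p : List α → Prop) :
    {l : List α | l.length = n ∧ p l}.ncard + {l : List α | l.length = n ∧ ¬p l}.ncard =
      Fintype.card α ^ n := by
  rw [← List.ncard_length_eq]
  exact Set.ncard_inter_add_ncard_sdiff_eq_ncard _ _ (List.finite_length_eq α n)

lemma charge_append_singleton (A : List Bool) (b : Bool) :
    charge (A ++ [b]) = chargeStep (charge A) b :=
  List.foldl_append ..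

lemma chargeStep_eq_one_iff (x : ZMod 3) (b : Bool) :
    chargeStep x b = 1 ↔ x ≠ 1 ∧ b = decide (x = 0) := by
  revert x b; decide

noncomputable def countChargeNeOne (n : ℕ) : ℕ :=
  {A : List Bool | A.length = n ∧ charge A ≠ 1}.ncard

lemma ncard_charge_eq_one_succ (n : ℕ) :
    {A : List Bool | A.length = n + 1 ∧ charge A = 1}.ncard = countChargeNeOne n := by
  symm
  refine Set.ncard_congr (fun A _ => A ++ [decide (charge A = 0)]) ?_ ?_ ?_
  · rintro A ⟨hn, hA⟩
    simp [hn, charge_append_singleton, chargeStep_eq_one_iff, hA]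
  · intro A A' _ _ h
    exact (List.append_inj' h rfl).1
  · rintro B ⟨hn, hB⟩
    obtain rfl | ⟨A, b, rfl⟩ := List.eq_nil_or_concat B
    · simp at hn
    rw [List.concat_eq_append, charge_append_singleton, chargeStep_eq_one_iff] at hB
    exact ⟨A, ⟨by simpa using hn, hB.1⟩, by rw [hB.2, List.concat_eq_append]⟩

lemma countChargeNeOne_succ_add (n : ℕ) :
    countChargeNeOne (n + 1) + countChargeNeOne n = 2 ^ (n + 1) := by
  have h := List.ncard_length_eq_and_add Bool (n + 1) (charge · = 1)
  rw [Fintype.card_bool] at h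
  rw [← ncard_charge_eq_one_succ n, add_comm]
  exact h

lemma countChargeNeOne_add_two (n : ℕ) :
    countChargeNeOne (n + 2) = countChargeNeOne (n + 1) + 2 * countChargeNeOne n := by
  have h₁ : countChargeNeOne (n + 2) + countChargeNeOne (n + 1) = 2 ^ (n + 1) * 2 := by
    rw [← pow_succ]; exact countChargeNeOne_succ_add (n + 1)
  have h₀ := countChargeNeOne_succ_add n
  omega

lemma charge_replicate_false (n : ℕ) :
    charge (List.replicate n false) = if Even n then -1 else 1 := by
  induction n with
  | zero => rfl
  | succ n ih =>
    rw [List.replicate_succ', charge_append_singleton, ih]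
    by_cases he : Even n <;> simp only [he, Nat.even_add_one, if_true, if_false, not_true,
      not_false_eq_true] <;> decide

lemma setOf_length_eq_and_removable {n : ℕ} (hn : n ≠ 0) :
    {A : List Bool | A.length = n ∧ Removable A} =
      {A : List Bool | A.length = n ∧ charge A ≠ 1} \ {List.replicate n false} := by
  ext A
  simp only [Set.mem_ofPred_eq, Set.mem_sdiff, Set.mem_singleton_iff, removable_iff_charge_ne_one,
    List.eq_replicate_iff]
  constructor
  · rintro ⟨rfl, hc, rfl | hA⟩
    · exact absurd rfl hn
    · exact ⟨⟨rfl, hc⟩, fun h => absurd (h.2 _ hA) (by decide)⟩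
  · rintro ⟨⟨rfl, hc⟩, h⟩
    refine ⟨rfl, hc, .inr ?_⟩
    by_contra ht
    exact h ⟨rfl, fun b hb => by cases b; rfl; exact absurd hb ht⟩

lemma r_add_ite_even {n : ℕ} (hn : n ≠ 0) :
    r n + (if Even n then 1 else 0) = countChargeNeOne n := by
  rw [r, setOf_length_eq_and_removable hn, countChargeNeOne]
  split_ifs with he
  · exact Set.ncard_sdiff_singleton_add_one
      ⟨List.length_replicate, by rw [charge_replicate_false, if_pos he]; decide⟩
      (List.finite_length_eq Bool n |>.subset fun _ h => h.1)
  · rw [Set.sdiff_singleton_eq_self fun h => h.2 (by rw [charge_replicate_false, if_neg he]),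
      add_zero]

lemma countChargeNeOne_zero : countChargeNeOne 0 = 1 := by
  rw [countChargeNeOne, ← Set.ncard_singleton ([] : List Bool)]
  congr 1
  ext A
  simp only [List.length_eq_zero_iff, Set.mem_ofPred_eq, Set.mem_singleton_iff,
    and_iff_left_iff_imp]
  rintro rfl
  decide

lemma r_add_three (m : ℕ) : r (m + 3) = r (m + 2) + 2 * r (m + 1) + 1 := by
  have hc : countChargeNeOne (m + 3) = countChargeNeOne (m + 2) + 2 * countChargeNeOne (m + 1) :=
    countChargeNeOne_add_two (m + 1)
  have h₁ := r_add_ite_even (n := m + 1) (by omega)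
  have h₂ := r_add_ite_even (n := m + 2) (by omega)
  have h₃ := r_add_ite_even (n := m + 3) (by omega)
  simp only [Nat.even_add_one, not_not] at h₁ h₂ h₃
  by_cases he : Even m <;>
    simp only [he, if_true, if_false, not_true, not_false_eq_true] at h₁ h₂ h₃ <;> omega

/-- `r 1 = 1`, `r 2 = 2`, and `r (n+1) = r n + 2 r (n-1) + 1` for `n ≥ 2`. -/
theorem r_recurrence :
    r 1 = 1 ∧ r 2 = 2 ∧ ∀ n, 2 ≤ n → r (n + 1) = r n + 2 * r (n - 1) + 1 := by
  have h₀ := countChargeNeOne_zero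
  have h₁ : countChargeNeOne 1 + countChargeNeOne 0 = 2 := countChargeNeOne_succ_add 0
  have h₂ : countChargeNeOne 2 + countChargeNeOne 1 = 4 := countChargeNeOne_succ_add 1
  have hr₁ := r_add_ite_even one_ne_zero
  have hr₂ := r_add_ite_even two_ne_zero
  rw [if_neg Nat.not_even_one] at hr₁
  rw [if_pos even_two] at hr₂
  refine ⟨by omega, by omega, fun n hn => ?_⟩
  obtain ⟨m, rfl⟩ := Nat.exists_eq_add_of_le' hn
  exact r_add_three m
end

section
/- Let M be the 5×5 adjacency matrix M = [[0,1,0,0,1],[0,1,1,0,0],[0,0,0,2,0],[0,1,1,0,0],[1,0,0,1,0]], and let (a_n,b_n,c_n,d_n,e_n) denote the first row of M^n. Then for all n ≥ 2, b_{n+1} = b_n + 2 b_{n-1} and d_{n+1} = d_n + 2 d_{n-1} + 1; consequently r_n := b_n + d_n satisfies r_{n+1} = r_n + 2 r_{n-1} + 1. -/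
/-- The adjacency matrix of the minimized DFA. -/
def Mdfa : Matrix (Fin 5) (Fin 5) ℤ :=
  !![0, 1, 0, 0, 1;
     0, 1, 1, 0, 0;
     0, 0, 0, 2, 0;
     0, 1, 1, 0, 0;
     1, 0, 0, 1, 0]

lemma mdfa_step (n : ℕ) :
    (Mdfa ^ (n+1)) 0 0 = (Mdfa ^ n) 0 4 ∧
    (Mdfa ^ (n+1)) 0 1 = (Mdfa ^ n) 0 0 + (Mdfa ^ n) 0 1 + (Mdfa ^ n) 0 3 ∧
    (Mdfa ^ (n+1)) 0 2 = (Mdfa ^ n) 0 1 + (Mdfa ^ n) 0 3 ∧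
    (Mdfa ^ (n+1)) 0 3 = 2 * (Mdfa ^ n) 0 2 + (Mdfa ^ n) 0 4 ∧
    (Mdfa ^ (n+1)) 0 4 = (Mdfa ^ n) 0 0 := by
  refine ⟨?_, ?_, ?_, ?_, ?_⟩ <;>
    · rw [pow_succ, Matrix.mul_apply]
      simp [Fin.sum_univ_five, Mdfa, Matrix.vecHead, Matrix.vecTail]
      try ring

lemma mdfa_inv (n : ℕ) :
    (Mdfa ^ n) 0 1 = (Mdfa ^ n) 0 2 + (Mdfa ^ n) 0 4 ∧
    (Mdfa ^ n) 0 0 + (Mdfa ^ n) 0 4 = 1 := by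
  induction n with
  | zero => simp [Matrix.one_apply]
  | succ n ih =>
    obtain ⟨s0, s1, s2, s3, s4⟩ := mdfa_step n
    constructor <;> linarith [ih.1, ih.2]

/-- With `(aₙ,bₙ,cₙ,dₙ,eₙ)` the first row of `Mⁿ`: for all `n ≥ 2`,
`b_{n+1} = bₙ + 2 b_{n-1}`, `d_{n+1} = dₙ + 2 d_{n-1} + 1`, and hence
`rₙ := bₙ + dₙ` satisfies `r_{n+1} = rₙ + 2 r_{n-1} + 1`. -/
theorem first_row_recurrences (n : ℕ) (hn : 2 ≤ n) :
    (Mdfa ^ (n + 1)) 0 1 = (Mdfa ^ n) 0 1 + 2 * (Mdfa ^ (n - 1)) 0 1 ∧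
    (Mdfa ^ (n + 1)) 0 3 = (Mdfa ^ n) 0 3 + 2 * (Mdfa ^ (n - 1)) 0 3 + 1 ∧
    (Mdfa ^ (n + 1)) 0 1 + (Mdfa ^ (n + 1)) 0 3 =
      ((Mdfa ^ n) 0 1 + (Mdfa ^ n) 0 3) +
        2 * ((Mdfa ^ (n - 1)) 0 1 + (Mdfa ^ (n - 1)) 0 3) + 1 := by
  obtain ⟨m, rfl⟩ : ∃ m, n = m + 1 := ⟨n - 1, by omega⟩
  simp only [Nat.add_sub_cancel]
  obtain ⟨s0, s1, s2, s3, s4⟩ := mdfa_step m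
  obtain ⟨t0, t1, t2, t3, t4⟩ := mdfa_step (m + 1)
  obtain ⟨i1, i2⟩ := mdfa_inv m
  refine ⟨by linarith, by linarith, by linarith⟩
end

section
/- In the circular coin-removal game with gaps, for n ≥ 3, a circular arrangement of n coins is removable if and only if the number of heads-up coins is positive and even. -/
/-- Flip the coin at position `j` of the cycle, if a coin is present there. -/
def cgFlip {n : ℕ} (f : Fin n → Option Bool) (j : Fin n) : Fin n → Option Bool :=
  Function.update f j ((f j).map (!·))

/-- One move in the circular coin-removal game with gaps: remove a heads-up
coin (leaving its position empty) and flip the coins, if present, in the two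
adjacent positions of the cycle. -/
def cgStep {n : ℕ} [NeZero n] (f g : Fin n → Option Bool) : Prop :=
  ∃ i : Fin n, f i = some true ∧
    g = cgFlip (cgFlip (Function.update f i none) (i + 1)) (i - 1)

/-- A circular arrangement is removable if all coins can be removed. -/
def cgRemovable {n : ℕ} [NeZero n] (f : Fin n → Option Bool) : Prop :=
  Relation.ReflTransGen cgStep f (fun _ => none)

/-!
Necessity: modulo 2, the number of heads plus the number of maximal runs of coins is invariant
under moves. On the full cycle there are no runs, so it is the number of heads; at the end it is 0.

Sufficiency: after removing one heads coin, the other `n - 1` coins form a run between gaps with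
an odd number of heads. In such a run, removing the leftmost heads coin leaves on its left a run of
tails ending in a single head, and on its right a run whose parity of heads was even and has been
flipped once; both are shorter runs with an odd number of heads, so induction on the length clears
the run.
-/

namespace CircularGaps

open scoped Fin.CommRing

variable {n : ℕ} [NeZero n]

lemma one_ne_zero_of_two_le (hn : 2 ≤ n) : (1 : Fin n) ≠ 0 := by
  rw [Ne, Fin.ext_iff, Fin.val_one', Nat.mod_eq_of_lt (by omega)]
  simp

lemma add_one_ne_self (hn : 2 ≤ n) (i : Fin n) : i + 1 ≠ i := by
  simpa using one_ne_zero_of_two_le hn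

lemma sub_one_ne_self (hn : 2 ≤ n) (i : Fin n) : i - 1 ≠ i := by
  simpa [sub_eq_self] using one_ne_zero_of_two_le hn

lemma add_one_ne_sub_one (hn : 3 ≤ n) (i : Fin n) : i + 1 ≠ i - 1 := by
  intro h
  have h2 : (2 : Fin n) = 0 := by linear_combination h
  rw [Fin.ext_iff, Fin.coe_ofNat_eq_mod, Nat.mod_eq_of_lt (by omega)] at h2
  simp at h2

lemma add_one_eq_zero {x : Fin n} (hx : x.val + 1 = n) : x + 1 = 0 := by
  rw [Fin.ext_iff, Fin.val_add, Fin.val_one', Fin.val_zero, Nat.add_mod_mod, hx, Nat.mod_self]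

lemma eq_add_one_iff_val {x y : Fin n} (hy : y ≠ 0) : y = x + 1 ↔ y.val = x.val + 1 := by
  rcases Nat.lt_or_ge (x.val + 1) n with h | h
  · rw [Fin.ext_iff, Fin.val_add_one_of_lt' h]
  · rw [add_one_eq_zero (by omega)]
    exact ⟨fun h' => absurd h' hy, fun h' => by omega⟩

lemma eq_sub_one_iff_val {x y : Fin n} (hx : x ≠ 0) : y = x - 1 ↔ y.val + 1 = x.val := by
  rw [eq_sub_iff_add_eq, eq_comm, eq_add_one_iff_val hx, eq_comm]

omit [NeZero n] in
lemma cgFlip_comp_equiv (f : Fin n → Option Bool) (e : Fin n ≃ Fin n) (j : Fin n) :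
    cgFlip f j ∘ e = cgFlip (f ∘ e) (e.symm j) := by
  simp [cgFlip, Function.update_comp_equiv]

lemma cgStep_comp_addRight {f g : Fin n → Option Bool} (h : cgStep f g) (a : Fin n) :
    cgStep (f ∘ Equiv.addRight a) (g ∘ Equiv.addRight a) := by
  obtain ⟨i, hi, rfl⟩ := h
  refine ⟨i - a, by simpa using hi, ?_⟩
  rw [cgFlip_comp_equiv, cgFlip_comp_equiv, Function.update_comp_equiv]
  simp only [Equiv.addRight_symm, Equiv.coe_addRight]
  ring_nf

lemma reflTransGen_comp_addRight {f g : Fin n → Option Bool}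
    (h : Relation.ReflTransGen cgStep f g) (a : Fin n) :
    Relation.ReflTransGen cgStep (f ∘ Equiv.addRight a) (g ∘ Equiv.addRight a) :=
  h.lift _ fun _ _ hs => cgStep_comp_addRight hs a

def move (f : Fin n → Option Bool) (i : Fin n) : Fin n → Option Bool :=
  cgFlip (cgFlip (Function.update f i none) (i + 1)) (i - 1)

lemma move_apply (hn : 3 ≤ n) (f : Fin n → Option Bool) (i y : Fin n) :
    move f i y =
      if y = i then none else if y = i + 1 ∨ y = i - 1 then (f y).map (!·) else f y := by
  have h1 := add_one_ne_self (by omega) i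
  have h2 := sub_one_ne_self (by omega) i
  have h3 := add_one_ne_sub_one hn i
  simp only [move, cgFlip, Function.update_apply]
  by_cases hy : y = i
  · simp [hy, h1.symm, h2.symm]
  by_cases hy1 : y = i + 1
  · simp [hy1, h1, h3]
  by_cases hy2 : y = i - 1
  · simp [hy2, h2, h3.symm]
  · simp [hy, hy1, hy2]

lemma move_self (hn : 3 ≤ n) (f : Fin n → Option Bool) (i : Fin n) : move f i i = none := by
  simp [move_apply hn]

lemma move_eq_none (hn : 3 ≤ n) {f : Fin n → Option Bool} {y : Fin n} (hy : f y = none)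
    (i : Fin n) : move f i y = none := by
  simp [move_apply hn, hy]

def heads (o : Option Bool) : ZMod 2 := if o = some true then 1 else 0

def coin (o : Option Bool) : ZMod 2 := if o.isSome then 1 else 0

@[simp] lemma heads_none : heads none = 0 := rfl

@[simp] lemma heads_some_true : heads (some true) = 1 := rfl

@[simp] lemma coin_none : coin none = 0 := rfl

@[simp] lemma coin_some (b : Bool) : coin (some b) = 1 := rfl

lemma heads_map_not (o : Option Bool) : heads (o.map (!·)) = heads o + coin o := by
  rcases o with _ | _ | _ <;> decide

lemma coin_map_not (o : Option Bool) : coin (o.map (!·)) = coin o := by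
  rcases o with _ | _ | _ <;> rfl

lemma coin_move (hn : 3 ≤ n) (f : Fin n → Option Bool) {i y : Fin n} (hy : y ≠ i) :
    coin (move f i y) = coin (f y) := by
  rw [move_apply hn, if_neg hy]
  split_ifs
  exacts [coin_map_not _, rfl]

lemma heads_move (hn : 3 ≤ n) (f : Fin n → Option Bool) {i y : Fin n} (hy : y ≠ i) :
    heads (move f i y) = heads (f y) + if y = i + 1 ∨ y = i - 1 then coin (f y) else 0 := by
  rw [move_apply hn, if_neg hy]
  split_ifs
  exacts [heads_map_not _, (add_zero _).symm]

lemma sum_heads_move (hn : 3 ≤ n) (f : Fin n → Option Bool) {s : Finset (Fin n)} {i : Fin n}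
    (hi : i ∉ s) :
    ∑ y ∈ s, heads (move f i y) =
      ∑ y ∈ s, heads (f y) +
        ∑ y ∈ s, if y = i + 1 ∨ y = i - 1 then coin (f y) else 0 := by
  rw [← Finset.sum_add_distrib]
  exact Finset.sum_congr rfl fun y hy => heads_move hn f (ne_of_mem_of_not_mem hy hi)

/-- Whether `x` is heads, plus whether `x` holds the last coin of a run, modulo 2. -/
def invariantTerm (f : Fin n → Option Bool) (x : Fin n) : ZMod 2 :=
  heads (f x) + coin (f x) * (1 - coin (f (x + 1)))

def invariant (f : Fin n → Option Bool) : ZMod 2 :=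
  ∑ x, invariantTerm f x

lemma invariantTerm_move_of_notMem (hn : 3 ≤ n) (f : Fin n → Option Bool) {i x : Fin n}
    (hx : x ∉ ({i - 1, i, i + 1} : Finset (Fin n))) :
    invariantTerm (move f i) x = invariantTerm f x := by
  simp only [Finset.mem_insert, Finset.mem_singleton, not_or] at hx
  obtain ⟨hx_pred, hx_self, hx_succ⟩ := hx
  have hx1 : x + 1 ≠ i := fun h => hx_pred (by rw [← h]; ring)
  simp only [invariantTerm, heads_move hn f hx_self, coin_move hn f hx_self, coin_move hn f hx1,
    hx_succ, hx_pred, or_self, if_false, add_zero]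

lemma invariant_move (hn : 3 ≤ n) {f : Fin n → Option Bool} {i : Fin n} (hi : f i = some true) :
    invariant (move f i) = invariant f := by
  have hne := add_one_ne_sub_one hn i
  have hpred := sub_one_ne_self (by omega) i
  have hsucc := add_one_ne_self (by omega) i
  have hsucc2 : i + 1 + 1 ≠ i := fun h => hne (eq_sub_iff_add_eq.mpr h)
  have hdiff : invariant (move f i) - invariant f =
      ∑ x ∈ {i - 1, i, i + 1}, (invariantTerm (move f i) x - invariantTerm f x) := by
    rw [invariant, invariant, ← Finset.sum_sub_distrib]
    refine (Finset.sum_subset (Finset.subset_univ _) fun x _ hx => ?_).symm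
    rw [invariantTerm_move_of_notMem hn f hx, sub_self]
  rw [Finset.sum_insert (by simp [hpred, hne.symm]), Finset.sum_insert (by simpa using hsucc.symm),
    Finset.sum_singleton] at hdiff
  simp only [invariantTerm, heads_move hn f hpred, heads_move hn f hsucc, coin_move hn f hpred,
    coin_move hn f hsucc, coin_move hn f hsucc2, move_self hn, hi, sub_add_cancel, hne, hne.symm,
    or_true, true_or, if_true, coin_none, coin_some, heads_none, heads_some_true] at hdiff
  have h2 : (2 : ZMod 2) = 0 := rfl
  rw [← sub_eq_zero, hdiff]
  linear_combination (coin (f (i - 1)) + coin (f (i + 1)) - 1) * h2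

lemma invariant_eq_of_reflTransGen (hn : 3 ≤ n) {f g : Fin n → Option Bool}
    (h : Relation.ReflTransGen cgStep f g) : invariant g = invariant f := by
  induction h with
  | refl => rfl
  | tail _ hstep ih =>
    obtain ⟨i, hi, rfl⟩ := hstep
    exact (invariant_move hn hi).trans ih

omit [NeZero n] in
lemma sum_heads_some (A : Fin n → Bool) :
    ∑ x, heads (some (A x)) = (Finset.univ.filter fun x => A x = true).card := by
  rw [← Finset.sum_boole]
  simp [heads]

lemma invariant_some (A : Fin n → Bool) :
    invariant (fun x => some (A x)) = (Finset.univ.filter fun x => A x = true).card := by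
  simp [invariant, invariantTerm, sum_heads_some]

lemma invariant_none : invariant (fun _ : Fin n => none) = 0 := by
  simp [invariant, invariantTerm]

lemma even_card_heads_of_removable (hn : 3 ≤ n) {A : Fin n → Bool}
    (h : cgRemovable fun x => some (A x)) :
    Even (Finset.univ.filter fun x => A x = true).card := by
  have := invariant_eq_of_reflTransGen hn h
  rwa [invariant_none, invariant_some, eq_comm, ZMod.natCast_eq_zero_iff_even] at this

lemma card_heads_pos_of_removable {A : Fin n → Bool} (h : cgRemovable fun x => some (A x)) :
    0 < (Finset.univ.filter fun x => A x = true).card := by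
  rcases h.cases_head with hfull | ⟨_, ⟨i, hi, _⟩, _⟩
  · simpa using congrFun hfull 0
  · exact Finset.card_pos.mpr ⟨i, by simpa using hi⟩

section Arc

omit [NeZero n]

def arc (lo hi : ℕ) : Finset (Fin n) := Finset.univ.filter fun x => lo ≤ x.val ∧ x.val < hi

@[simp]
lemma mem_arc {lo hi : ℕ} {x : Fin n} : x ∈ arc lo hi ↔ lo ≤ x.val ∧ x.val < hi := by
  simp [arc]

lemma arc_zero_eq_univ : (arc 0 n : Finset (Fin n)) = Finset.univ := by
  ext x
  simp [x.isLt]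

lemma sum_arc_eq {M : Type*} [AddCommMonoid M] (F : Fin n → M) {lo hi : ℕ} {x : Fin n}
    (hx : x ∈ arc lo hi) :
    ∑ y ∈ arc lo hi, F y =
      ∑ y ∈ arc lo x.val, F y + F x + ∑ y ∈ arc (x.val + 1) hi, F y := by
  rw [mem_arc] at hx
  have hsplit : arc lo hi = (arc lo x.val ∪ {x}) ∪ arc (x.val + 1) hi := by
    ext y
    simp only [mem_arc, Finset.mem_union, Finset.mem_singleton, Fin.ext_iff]
    omega
  rw [hsplit, Finset.sum_union, Finset.sum_union, Finset.sum_singleton]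
  all_goals
    simp only [Finset.disjoint_left, Finset.mem_union, Finset.mem_singleton, mem_arc, Fin.ext_iff]
    omega

lemma exists_first_heads {lo hi : ℕ} {f : Fin n → Option Bool}
    (hodd : ∑ x ∈ arc lo hi, heads (f x) = 1) :
    ∃ x ∈ arc lo hi, f x = some true ∧ ∀ y ∈ arc lo x.val, heads (f y) = 0 := by
  set headsInArc := (arc lo hi).filter fun x => f x = some true
  have hne : headsInArc.Nonempty := by
    by_contra h
    rw [Finset.not_nonempty_iff_eq_empty, Finset.filter_eq_empty_iff] at h
    rw [Finset.sum_eq_zero fun x hx => by simp [heads, h hx]] at hodd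
    exact zero_ne_one hodd
  obtain ⟨hx, hhead⟩ := Finset.mem_filter.mp (Finset.min'_mem _ hne)
  refine ⟨_, hx, hhead, fun y hy => ?_⟩
  simp only [heads, ite_eq_right_iff, one_ne_zero, imp_false]
  intro hy_head
  rw [mem_arc] at hx hy
  have := Fin.le_iff_val_le_val.mp <| Finset.min'_le headsInArc y <|
    Finset.mem_filter.mpr ⟨mem_arc.mpr ⟨hy.1, by omega⟩, hy_head⟩
  omega

end Arc

lemma mem_arc_one {y : Fin n} : y ∈ arc 1 n ↔ y ≠ 0 := by
  rw [mem_arc, ← Fin.val_ne_zero_iff]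
  omega

/-- The coins at positions with values in `[lo, hi)` form a run with an odd number of heads
whose neighbouring positions are empty; the parity condition is void for the empty run.
As `1 ≤ lo`, only the right neighbour may wrap around to `0`, and positions inside the run are
neighbours iff their values are. -/
structure IsOddRun (f : Fin n → Option Bool) (lo hi : ℕ) : Prop where
  one_le_lo : 1 ≤ lo
  hi_le : hi ≤ n
  coin_eq : ∀ x ∈ arc lo hi, coin (f x) = 1
  left_gap : ∀ x : Fin n, x.val = lo → f (x - 1) = none
  right_gap : ∀ x : Fin n, x.val + 1 = hi → f (x + 1) = none
  sum_heads : (arc lo hi : Finset (Fin n)).Nonempty → ∑ x ∈ arc lo hi, heads (f x) = 1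

namespace IsOddRun

variable {f : Fin n → Option Bool} {lo hi : ℕ} {x : Fin n}

lemma ne_zero (hr : IsOddRun f lo hi) (hx : x ∈ arc lo hi) : x ≠ 0 := by
  rintro rfl
  have := hr.one_le_lo
  simp at hx
  omega

lemma move_apply_of_notMem (hn : 3 ≤ n) (hr : IsOddRun f lo hi) (hx : x ∈ arc lo hi)
    {y : Fin n} (hy : y ∉ arc lo hi) : move f x y = f y := by
  have hx' := mem_arc.mp hx
  rw [move_apply hn, if_neg (ne_of_mem_of_not_mem hx hy).symm]
  split_ifs with hnbr
  · rcases hnbr with rfl | rfl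
    · have hxhi : x.val + 1 = hi := by
        by_contra hne
        exact hy (mem_arc.mpr (by rw [Fin.val_add_one_of_lt' (by have := hr.hi_le; omega)]; omega))
      simp [hr.right_gap x hxhi]
    · have hxlo : x.val = lo := by
        by_contra hne
        exact hy (mem_arc.mpr (by rw [Fin.val_sub_one_of_ne_zero (hr.ne_zero hx)]; omega))
      simp [hr.left_gap x hxlo]
  · rfl

lemma sum_heads_right (hr : IsOddRun f lo hi) (hx : x ∈ arc lo hi) (hhead : f x = some true)
    (htails : ∀ y ∈ arc lo x.val, heads (f y) = 0) :
    ∑ y ∈ arc (x.val + 1) hi, heads (f y) = 0 := by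
  have h := hr.sum_heads ⟨x, hx⟩
  rw [sum_arc_eq _ hx, Finset.sum_eq_zero htails, hhead] at h
  exact add_eq_left.mp (by rwa [zero_add, add_comm] at h)

lemma right_after_move (hn : 3 ≤ n) (hr : IsOddRun f lo hi) (hx : x ∈ arc lo hi)
    (hhead : f x = some true) (htails : ∀ y ∈ arc lo x.val, heads (f y) = 0) :
    IsOddRun (move f x) (x.val + 1) hi where
  one_le_lo := by omega
  hi_le := hr.hi_le
  coin_eq y hy := by
    rw [mem_arc] at hx hy
    rw [coin_move hn f (Fin.ne_of_val_ne (by omega)), hr.coin_eq y (mem_arc.mpr (by omega))]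
  left_gap y hy := by
    rw [← (eq_sub_one_iff_val (Fin.val_ne_zero_iff.mp (by omega))).mpr hy.symm, move_self hn]
  right_gap y hy := move_eq_none hn (hr.right_gap y hy) x
  sum_heads := by
    rintro ⟨z, hz⟩
    have hx' := mem_arc.mp hx
    have hz' := mem_arc.mp hz
    have hsucc : (x + 1).val = x.val + 1 := Fin.val_add_one_of_lt' (by have := hr.hi_le; omega)
    rw [sum_heads_move hn f (by simp), hr.sum_heads_right hx hhead htails, zero_add,
      Finset.sum_eq_single_of_mem (x + 1) (mem_arc.mpr (by omega)), if_pos (Or.inl rfl)]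
    · exact hr.coin_eq _ (mem_arc.mpr (by omega))
    · intro y hy hne
      rw [if_neg]
      rintro (h | h)
      · exact hne h
      · have := (eq_sub_one_iff_val (hr.ne_zero hx)).mp h
        simp only [mem_arc] at hy
        omega

lemma left_after_move_clear (hn : 3 ≤ n) (hr : IsOddRun f lo hi) (hx : x ∈ arc lo hi)
    (htails : ∀ y ∈ arc lo x.val, heads (f y) = 0) :
    IsOddRun ((arc (x.val + 1) hi).piecewise (fun _ => none) (move f x)) lo x.val := by
  have hx' := mem_arc.mp hx
  have hlo := hr.one_le_lo
  have hleft : ∀ y : Fin n, y.val ≤ x.val → y ∉ arc (x.val + 1) hi := by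
    intro y hy
    simp only [mem_arc]
    omega
  refine ⟨hlo, by omega, fun y hy => ?_, fun y hy => ?_, fun y hy => ?_, ?_⟩
  · rw [mem_arc] at hy
    rw [Finset.piecewise_eq_of_notMem _ _ _ (hleft y (by omega)),
      coin_move hn f (Fin.ne_of_val_ne (by omega)), hr.coin_eq y (mem_arc.mpr (by omega))]
  · have hy0 : y ≠ 0 := Fin.val_ne_zero_iff.mp (by omega)
    have hpred : (y - 1).val = y.val - 1 := Fin.val_sub_one_of_ne_zero hy0
    rw [Finset.piecewise_eq_of_notMem _ _ _ (hleft _ (by omega)),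
      move_eq_none hn (hr.left_gap y hy) x]
  · rw [← (eq_add_one_iff_val (hr.ne_zero hx)).mpr hy.symm,
      Finset.piecewise_eq_of_notMem _ _ _ (hleft x le_rfl), move_self hn]
  · rintro ⟨z, hz⟩
    have hz' := mem_arc.mp hz
    have hpred : (x - 1).val = x.val - 1 := Fin.val_sub_one_of_ne_zero (hr.ne_zero hx)
    rw [Finset.sum_congr rfl fun y hy => by
        rw [Finset.piecewise_eq_of_notMem _ _ _ (hleft y (by simp only [mem_arc] at hy; omega))],
      sum_heads_move hn f (by simp), Finset.sum_eq_zero htails, zero_add,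
      Finset.sum_eq_single_of_mem (x - 1) (mem_arc.mpr (by omega)), if_pos (Or.inr rfl)]
    · exact hr.coin_eq _ (mem_arc.mpr (by omega))
    · intro y hy hne
      rw [if_neg]
      rintro (h | h)
      · simp only [mem_arc] at hy
        have := (eq_add_one_iff_val (Fin.val_ne_zero_iff.mp (by omega : y.val ≠ 0))).mp h
        omega
      · exact hne h

lemma clear_left_clear_right_move (hn : 3 ≤ n) (hr : IsOddRun f lo hi) (hx : x ∈ arc lo hi) :
    (arc lo x.val).piecewise (fun _ => none)
        ((arc (x.val + 1) hi).piecewise (fun _ => none) (move f x)) =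
      (arc lo hi).piecewise (fun _ => none) f := by
  funext y
  have hx' := mem_arc.mp hx
  by_cases hy : y ∈ arc lo hi
  · rw [Finset.piecewise_eq_of_mem _ _ _ hy]
    by_cases hyL : y ∈ arc lo x.val
    · exact Finset.piecewise_eq_of_mem _ _ _ hyL
    rw [Finset.piecewise_eq_of_notMem _ _ _ hyL]
    by_cases hyR : y ∈ arc (x.val + 1) hi
    · exact Finset.piecewise_eq_of_mem _ _ _ hyR
    rw [Finset.piecewise_eq_of_notMem _ _ _ hyR]
    simp only [mem_arc] at hy hyL hyR
    rw [Fin.ext (by omega : y.val = x.val), move_self hn]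
  · have hsub : ∀ {a b : ℕ}, lo ≤ a → b ≤ hi → y ∉ arc a b := fun ha hb hy' =>
      hy (mem_arc.mpr (by simp only [mem_arc] at hy'; omega))
    rw [Finset.piecewise_eq_of_notMem _ _ _ hy,
      Finset.piecewise_eq_of_notMem _ _ _ (hsub le_rfl hx'.2.le),
      Finset.piecewise_eq_of_notMem _ _ _ (hsub (by omega) le_rfl),
      hr.move_apply_of_notMem hn hx hy]

theorem reflTransGen_clear (hn : 3 ≤ n) (hr : IsOddRun f lo hi) :
    Relation.ReflTransGen cgStep f ((arc lo hi).piecewise (fun _ => none) f) := by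
  induction hk : hi - lo using Nat.strong_induction_on generalizing lo hi f with
  | _ k ih =>
  rcases (arc lo hi : Finset (Fin n)).eq_empty_or_nonempty with hemp | hne
  · rw [hemp, Finset.piecewise_empty]
  obtain ⟨x, hx, hhead, htails⟩ := exists_first_heads (hr.sum_heads hne)
  have hx' := mem_arc.mp hx
  have hright := ih _ (by omega) (hr.right_after_move hn hx hhead htails) rfl
  have hleft := ih _ (by omega) (hr.left_after_move_clear hn hx htails) rfl
  rw [← hr.clear_left_clear_right_move hn hx]
  exact .head ⟨x, hhead, rfl⟩ (hright.trans hleft)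

end IsOddRun

lemma isOddRun_move_zero (hn : 3 ≤ n) {A : Fin n → Bool} (h0 : A 0 = true)
    (hsum : ∑ x, heads (some (A x)) = 0) : IsOddRun (move (fun x => some (A x)) 0) 1 n where
  one_le_lo := le_rfl
  hi_le := le_rfl
  coin_eq y hy := coin_move hn _ (mem_arc_one.mp hy)
  left_gap y hy := by
    have hy0 : y ≠ 0 := Fin.val_ne_zero_iff.mp (by omega)
    rw [← (eq_sub_one_iff_val (y := 0) hy0).mpr (by simp [hy]), move_self hn]
  right_gap y hy := by rw [add_one_eq_zero hy, move_self hn]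
  sum_heads _ := by
    have hrest := sum_arc_eq (fun x => heads (some (A x))) (mem_arc.mpr ⟨le_rfl, Fin.isLt 0⟩)
    rw [Fin.val_zero, arc_zero_eq_univ, hsum, zero_add,
      Finset.sum_eq_zero fun y hy => absurd (mem_arc.mp hy).2 (Nat.not_lt_zero _), h0,
      heads_some_true] at hrest
    rw [sum_heads_move hn _ (mem_arc_one.not_left.mpr rfl),
      Finset.sum_eq_add_of_mem (0 + 1) (0 - 1) (mem_arc_one.mpr (add_one_ne_self (by omega) 0))
        (mem_arc_one.mpr (sub_one_ne_self (by omega) 0)) (add_one_ne_sub_one hn 0)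
        fun c _ hc => if_neg (not_or.mpr hc),
      if_pos (Or.inl rfl), if_pos (Or.inr rfl), coin_some, coin_some]
    linear_combination (-1 : ZMod 2) * hrest

lemma removable_of_heads_zero (hn : 3 ≤ n) {A : Fin n → Bool} (h0 : A 0 = true)
    (hsum : ∑ x, heads (some (A x)) = 0) : cgRemovable fun x => some (A x) := by
  have hclear : (arc 1 n).piecewise (fun _ => none) (move (fun x => some (A x)) 0) =
      fun _ => none := by
    funext y
    by_cases hy : y ∈ arc 1 n
    · exact Finset.piecewise_eq_of_mem _ _ _ hy
    · rw [Finset.piecewise_eq_of_notMem _ _ _ hy, not_not.mp (mem_arc_one.not.mp hy),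
        move_self hn]
  rw [cgRemovable, ← hclear]
  exact .head ⟨0, by simp [h0], rfl⟩ ((isOddRun_move_zero hn h0 hsum).reflTransGen_clear hn)

lemma removable_of_even_card_heads (hn : 3 ≤ n) {A : Fin n → Bool}
    (hpos : 0 < (Finset.univ.filter fun x => A x = true).card)
    (heven : Even (Finset.univ.filter fun x => A x = true).card) :
    cgRemovable fun x => some (A x) := by
  obtain ⟨i, hi⟩ := Finset.card_pos.mp hpos
  rw [Finset.mem_filter] at hi
  have hsum : ∑ x, heads (some (A (x + i))) = 0 := by
    rw [← ZMod.natCast_eq_zero_iff_even, ← sum_heads_some] at heven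
    exact (Equiv.sum_comp (Equiv.addRight i) fun x => heads (some (A x))).trans heven
  have hrot := reflTransGen_comp_addRight
    (removable_of_heads_zero hn (A := fun x => A (x + i)) (by rw [zero_add]; exact hi.2) hsum) (-i)
  simpa [cgRemovable, Function.comp_def] using hrot

end CircularGaps

/-- For `n ≥ 3`, a circular arrangement of `n` coins (with gaps) is removable
iff the number of heads-up coins is positive and even. -/
theorem circular_gaps_removable_iff (m : ℕ) (A : Fin (m + 3) → Bool) :
    cgRemovable (fun i => some (A i)) ↔
      (0 < (Finset.univ.filter fun i => A i = true).card ∧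
        Even (Finset.univ.filter fun i => A i = true).card) := by
  have hn : 3 ≤ m + 3 := by omega
  exact ⟨fun h => ⟨CircularGaps.card_heads_pos_of_removable h,
      CircularGaps.even_card_heads_of_removable hn h⟩,
    fun h => CircularGaps.removable_of_even_card_heads hn h.1 h.2⟩
end

section
/- In the circular coin-removal game without gaps, for n ≥ 2, a circular arrangement of n coins is removable if and only if it contains at least one heads-up coin and the number of tails-up coins is odd. -/
/-- Flip the (distinct) circular neighbors of position `i` in the list `l`
regarded as a circular arrangement; position `i` itself is never flipped. -/
def circFlip (l : List Bool) (i : ℕ) : List Bool :=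
  (List.range l.length).map (fun j =>
    if j ≠ i ∧ (j = (i + 1) % l.length ∨ j = (i + l.length - 1) % l.length)
    then !(l.getD j false) else l.getD j false)

/-- One move in the circular no-gaps game: remove a heads-up coin at position
`i`, flipping its circular neighbors, and close the circle. -/
def cStep (l l' : List Bool) : Prop :=
  ∃ i, i < l.length ∧ l.getD i false = true ∧ l' = (circFlip l i).eraseIdx i

/-- A circular arrangement is removable if it reduces to the empty arrangement. -/
def cRemovable (l : List Bool) : Prop :=
  Relation.ReflTransGen cStep l []

/-! ### Auxiliary machinery -/

/-- Parity-weight of a boolean list: the number of `false`s, in `ZMod 2`. -/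
def wt : List Bool → ZMod 2
  | [] => 0
  | b :: t => (if b then 0 else 1) + wt t

lemma wt_eq_count (l : List Bool) : wt l = (l.count false : ZMod 2) := by
  induction l with
  | nil => simp [wt]
  | cons b t ih =>
    cases b <;> simp [wt, List.count_cons, ih] <;> ring

lemma wt_append (a b : List Bool) : wt (a ++ b) = wt a + wt b := by
  induction a with
  | nil => simp [wt]
  | cons x t ih => simp [wt, ih]; ring

lemma odd_iff_cast (c : ℕ) : Odd c ↔ (c : ZMod 2) = 1 := by
  rw [Nat.odd_iff]
  constructor
  · intro h; rw [← ZMod.natCast_mod, h, Nat.cast_one]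
  · intro h
    by_contra h2
    have h0 : c % 2 = 0 := by omega
    rw [← ZMod.natCast_mod, h0, Nat.cast_zero] at h
    exact zero_ne_one h

lemma odd_count_iff_wt (l : List Bool) : Odd (l.count false) ↔ wt l = 1 := by
  rw [odd_iff_cast, wt_eq_count]

lemma wt_range_map (f : ℕ → Bool) (n : ℕ) :
    wt ((List.range n).map f) = ∑ j ∈ Finset.range n, (if f j then 0 else 1) := by
  induction n with
  | zero => simp [wt]
  | succ n ih =>
    rw [List.range_succ, List.map_append, wt_append, Finset.sum_range_succ, ih]
    simp [wt]

lemma circFlip_length (l : List Bool) (i : ℕ) : (circFlip l i).length = l.length := by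
  simp [circFlip]

lemma circFlip_getElem (l : List Bool) (i j : ℕ) (hj : j < (circFlip l i).length) :
    (circFlip l i)[j] =
      if j ≠ i ∧ (j = (i + 1) % l.length ∨ j = (i + l.length - 1) % l.length)
      then !(l.getD j false) else l.getD j false := by
  simp [circFlip]

/-- Facts about the two circular neighbours. -/
lemma nbr_facts {n i : ℕ} (hi : i < n) (hn : 2 ≤ n) :
    (i + 1) % n < n ∧ (i + n - 1) % n < n ∧ (i + 1) % n ≠ i ∧ (i + n - 1) % n ≠ i ∧
      (3 ≤ n → (i + 1) % n ≠ (i + n - 1) % n) ∧ (n = 2 → (i + 1) % n = (i + n - 1) % n) := by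
  have h1 : (i + 1) % n = if i + 1 = n then 0 else i + 1 := by
    split
    · next h => rw [h, Nat.mod_self]
    · exact Nat.mod_eq_of_lt (by omega)
  have h2 : (i + n - 1) % n = if i = 0 then n - 1 else i - 1 := by
    split
    · next h => subst h; simpa using Nat.mod_eq_of_lt (by omega)
    · next h =>
        have he : i + n - 1 = (i - 1) + n := by omega
        rw [he, Nat.add_mod_right]
        exact Nat.mod_eq_of_lt (by omega)
  rw [h1, h2]
  split_ifs <;> omega

lemma wt_eraseIdx (L : List Bool) (i : ℕ) (hi : i < L.length) (ht : L[i] = true) :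
    wt (L.eraseIdx i) = wt L := by
  rw [List.eraseIdx_eq_take_drop_succ, wt_append]
  conv_rhs => rw [← List.take_append_drop i L, wt_append, List.drop_eq_getElem_cons hi]
  rw [ht]
  simp [wt]

/-- The flip-set of a move. -/
def flipSet (n i : ℕ) : Finset ℕ :=
  (Finset.range n).filter (fun j => j ≠ i ∧ (j = (i + 1) % n ∨ j = (i + n - 1) % n))

lemma wt_circFlip (l : List Bool) (i : ℕ) :
    wt (circFlip l i) = wt l + ((flipSet l.length i).card : ZMod 2) := by
  set n := l.length with hn
  have hl : l = (List.range n).map (fun j => l.getD j false) := by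
    apply List.ext_getElem
    · simp [hn]
    · intro j h1 h2
      simp only [List.getElem_map, List.getElem_range]
      rw [List.getD_eq_getElem l false h1]
  rw [show circFlip l i = (List.range n).map (fun j =>
      if j ≠ i ∧ (j = (i + 1) % n ∨ j = (i + n - 1) % n)
      then !(l.getD j false) else l.getD j false) from rfl]
  rw [wt_range_map]
  conv_rhs => rw [hl, wt_range_map]
  simp only [flipSet]
  rw [← Finset.sum_boole (fun j => j ≠ i ∧ (j = (i + 1) % n ∨ j = (i + n - 1) % n))
    (Finset.range n)]
  rw [← Finset.sum_add_distrib]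
  apply Finset.sum_congr rfl
  intro j _
  by_cases hc : j ≠ i ∧ (j = (i + 1) % n ∨ j = (i + n - 1) % n) <;>
    cases hb : l.getD j false <;> simp [hc, hb] <;> decide

lemma flipSet_card_of_three {n i : ℕ} (hi : i < n) (hn : 3 ≤ n) :
    (flipSet n i).card = 2 := by
  obtain ⟨ha, hb, hai, hbi, hab, -⟩ := nbr_facts hi (by omega)
  have hab' := hab hn
  have : flipSet n i = {(i + 1) % n, (i + n - 1) % n} := by
    ext j
    simp only [flipSet, Finset.mem_filter, Finset.mem_range, Finset.mem_insert,
      Finset.mem_singleton]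
    constructor
    · rintro ⟨-, -, h⟩; exact h
    · rintro (rfl | rfl)
      · exact ⟨ha, hai, Or.inl rfl⟩
      · exact ⟨hb, hbi, Or.inr rfl⟩
  rw [this, Finset.card_insert_of_notMem (by simpa using hab'), Finset.card_singleton]

lemma flipSet_card_of_two {i : ℕ} (hi : i < 2) : (flipSet 2 i).card = 1 := by
  interval_cases i <;> decide

lemma flipSet_card_of_one {i : ℕ} (hi : i < 1) : (flipSet 1 i).card = 0 := by
  interval_cases i; decide

/-- The conserved invariant. -/
def cInv (l : List Bool) : ZMod 2 := wt l + (if 2 ≤ l.length then 1 else 0)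

lemma cStep_inv {l l' : List Bool} (h : cStep l l') : cInv l' = cInv l := by
  obtain ⟨i, hi, ht, rfl⟩ := h
  have hflen : (circFlip l i).length = l.length := circFlip_length l i
  have hlen : ((circFlip l i).eraseIdx i).length = l.length - 1 := by
    rw [List.length_eraseIdx]
    simp [hflen, hi]
  have hii : i < (circFlip l i).length := by omega
  have htop : (circFlip l i)[i] = true := by
    rw [circFlip_getElem l i i hii]
    simp only [ne_eq, not_true_eq_false, false_and, if_false]
    rw [List.getD_eq_getElem l false hi] at ht ⊢
    exact ht
  have hw : wt ((circFlip l i).eraseIdx i) = wt l + ((flipSet l.length i).card : ZMod 2) := by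
    rw [wt_eraseIdx _ i hii htop, wt_circFlip]
  rcases Nat.lt_or_ge l.length 2 with h2 | h2
  · -- length 1 (length 0 impossible)
    have h1 : l.length = 1 := by omega
    rw [cInv, cInv, hw, hlen, h1, flipSet_card_of_one (h1 ▸ hi)]
    norm_num
  · rcases Nat.lt_or_ge l.length 3 with h3 | h3
    · have h2' : l.length = 2 := by omega
      rw [cInv, cInv, hw, hlen, h2', flipSet_card_of_two (h2' ▸ hi)]
      norm_num
    · rw [cInv, cInv, hw, hlen, flipSet_card_of_three hi h3]
      have : ((2 : ℕ) : ZMod 2) = 0 := by decide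
      rw [this]
      simp only [if_pos h2, if_pos (show 2 ≤ l.length - 1 by omega)]
      ring

lemma cRemovable_inv {l : List Bool} (h : cRemovable l) : cInv l = 0 := by
  induction h using Relation.ReflTransGen.head_induction_on with
  | refl => decide
  | head hstep _ ih => rw [cStep_inv hstep] at ih; exact ih

/-- `wt` is preserved by a step on a list of length at least 3. -/
lemma wt_cStep {l l' : List Bool} (h : cStep l l') (h3 : 3 ≤ l.length) : wt l' = wt l := by
  have hinv := cStep_inv h
  obtain ⟨i, hi, -, rfl⟩ := h
  have hlen : ((circFlip l i).eraseIdx i).length = l.length - 1 := by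
    rw [List.length_eraseIdx]; simp [circFlip_length, hi]
  rw [cInv, cInv, hlen, if_pos (show 2 ≤ l.length - 1 by omega), if_pos (by omega)] at hinv
  exact add_right_cancel hinv

/-- In a circular non-constant arrangement there is a head with a tail neighbour. -/
lemma exists_true_false_adj (l : List Bool) (ht : true ∈ l) (hf : false ∈ l) :
    ∃ i < l.length, l.getD i false = true ∧
      (l.getD ((i + 1) % l.length) false = false ∨
       l.getD ((i + l.length - 1) % l.length) false = false) := by
  set n := l.length with hn
  have hnpos : 0 < n := by
    rw [hn]; exact List.length_pos_iff.mpr (List.ne_nil_of_mem ht)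
  have key : ∃ j, j < n ∧ ((l.getD j false = true ∧ l.getD ((j + 1) % n) false = false) ∨
      (l.getD j false = false ∧ l.getD ((j + 1) % n) false = true)) := by
    by_contra hcon
    have hstep' : ∀ j, j < n → l.getD ((j + 1) % n) false = l.getD j false := by
      intro j hj
      cases hb : l.getD j false <;> cases hb' : l.getD ((j + 1) % n) false
      · rfl
      · exact absurd ⟨j, hj, Or.inr ⟨hb, hb'⟩⟩ hcon
      · exact absurd ⟨j, hj, Or.inl ⟨hb, hb'⟩⟩ hcon
      · rfl
    have hconst : ∀ j, j < n → l.getD j false = l.getD 0 false := by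
      intro j
      induction j with
      | zero => intro _; rfl
      | succ j ihj =>
        intro hj
        have hj' : j < n := by omega
        have hmod : (j + 1) % n = j + 1 := Nat.mod_eq_of_lt hj
        rw [← hmod, hstep' j hj', ihj hj']
    obtain ⟨p, hp, hpt⟩ := List.mem_iff_getElem.mp ht
    obtain ⟨q, hq, hqf⟩ := List.mem_iff_getElem.mp hf
    have h1 : l.getD p false = true := by rw [List.getD_eq_getElem l false hp]; exact hpt
    have h2 : l.getD q false = false := by rw [List.getD_eq_getElem l false hq]; exact hqf
    rw [hconst p hp] at h1
    rw [hconst q hq] at h2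
    rw [h1] at h2
    exact Bool.noConfusion h2
  obtain ⟨j, hj, hcase⟩ := key
  rcases hcase with ⟨hjt, hjf⟩ | ⟨hjf, hjt⟩
  · exact ⟨j, hj, hjt, Or.inl hjf⟩
  · refine ⟨(j + 1) % n, Nat.mod_lt _ hnpos, hjt, Or.inr ?_⟩
    have : ((j + 1) % n + n - 1) % n = j := by
      rcases Nat.lt_or_ge (j + 1) n with h | h
      · rw [Nat.mod_eq_of_lt h]
        have he : j + 1 + n - 1 = j + n := by omega
        rw [he, Nat.add_mod_right, Nat.mod_eq_of_lt hj]
      · have hjn : j + 1 = n := by omega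
        rw [hjn, Nat.mod_self]
        have h0 : 0 + n - 1 = j := by omega
        rw [h0]
        exact Nat.mod_eq_of_lt hj
    rw [this]
    exact hjf

lemma suff : ∀ n (l : List Bool), l.length = n → 2 ≤ n → true ∈ l →
    Odd (l.count false) → cRemovable l := by
  intro n
  induction n using Nat.strong_induction_on with
  | _ n ih =>
    intro l hlen h2 ht hodd
    rcases Nat.lt_or_ge n 3 with h3 | h3
    · -- n = 2
      have hn2 : n = 2 := by omega
      subst hn2
      match l, hlen with
      | [a, b], _ =>
        cases a <;> cases b
        · simp at ht
        · show Relation.ReflTransGen cStep [false, true] []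
          exact Relation.ReflTransGen.head
            (show cStep [false, true] [true] from ⟨1, by decide⟩)
            (Relation.ReflTransGen.head (show cStep [true] [] from ⟨0, by decide⟩) .refl)
        · show Relation.ReflTransGen cStep [true, false] []
          exact Relation.ReflTransGen.head
            (show cStep [true, false] [true] from ⟨0, by decide⟩)
            (Relation.ReflTransGen.head (show cStep [true] [] from ⟨0, by decide⟩) .refl)
        · exfalso; revert hodd; decide
    · -- n ≥ 3
      subst hlen
      have hf : false ∈ l := by
        have hcpos : 0 < l.count false := by
          rcases hodd with ⟨k, hk⟩; omega
        exact List.count_pos_iff.mp hcpos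
      obtain ⟨i, hi, hti, hnbr⟩ := exists_true_false_adj l ht hf
      set l' := (circFlip l i).eraseIdx i with hl'
      have hstep : cStep l l' := ⟨i, hi, hti, rfl⟩
      have hflen : (circFlip l i).length = l.length := circFlip_length l i
      have hlen' : l'.length = l.length - 1 := by
        rw [hl', List.length_eraseIdx]; simp [hflen, hi]
      obtain ⟨ha, hb, hai, hbi, -, -⟩ := nbr_facts hi (by omega)
      -- the flipped false neighbour gives a true coin in l'
      have hmem' : true ∈ l' := by
        rcases hnbr with hnb | hnb
        · refine List.mem_eraseIdx_iff_getElem.mpr ⟨(i + 1) % l.length, by omega, hai, ?_⟩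
          rw [circFlip_getElem _ _ _ (by omega)]
          rw [if_pos ⟨hai, Or.inl rfl⟩, hnb]
          rfl
        · refine List.mem_eraseIdx_iff_getElem.mpr
            ⟨(i + l.length - 1) % l.length, by omega, hbi, ?_⟩
          rw [circFlip_getElem _ _ _ (by omega)]
          rw [if_pos ⟨hbi, Or.inr rfl⟩, hnb]
          rfl
      have hodd' : Odd (l'.count false) := by
        rw [odd_count_iff_wt] at hodd ⊢
        rw [wt_cStep hstep h3]
        exact hodd
      exact Relation.ReflTransGen.head hstep
        (ih (l.length - 1) (by omega) l' hlen' (by omega) hmem' hodd')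

/-- For `n ≥ 2`, a circular arrangement of `n` coins without gaps is removable
iff it contains at least one heads-up coin and the number of tails-up coins
is odd. -/
theorem circular_nogaps_removable_iff (l : List Bool) (hl : 2 ≤ l.length) :
    cRemovable l ↔ true ∈ l ∧ Odd (l.count false) := by
  constructor
  · intro h
    have hinv := cRemovable_inv h
    rw [cInv, if_pos hl] at hinv
    have hwt : wt l = 1 := by
      have := eq_neg_of_add_eq_zero_left hinv
      rwa [show (-1 : ZMod 2) = 1 from by decide] at this
    refine ⟨?_, (odd_count_iff_wt l).mpr hwt⟩
    -- need a first move, which requires a head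
    rcases (Relation.ReflTransGen.cases_head h) with heq | ⟨c, hstep, -⟩
    · exfalso; rw [heq] at hl; simp at hl
    · obtain ⟨i, hi, hti, -⟩ := hstep
      rw [List.getD_eq_getElem l false hi] at hti
      exact hti ▸ List.getElem_mem hi
  · rintro ⟨ht, hodd⟩
    exact suff l.length l rfl hl ht hodd
end
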